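/- arXiv:2012.00714 — 7 statements merged into one kernel-verified Lean document; each statement's English description precedes it below -/
import Mathlib

section
/- For any vector y in R^d and any λ ∈ [0, ∞), the minimum over u in the monotone cone M = {θ ∈ R^d : θ_1 ≤ ... ≤ θ_d} of ‖y − u‖² + λ‖u‖² equals (1/(1+λ))‖y − Π_M(y)‖² + (λ/(1+λ))‖y‖², where Π_M(y) is the Euclidean projection of y onto M. -/
/-- For any `y ∈ ℝ^d` and `λ ∈ [0, ∞)`, the minimum over `u` in the
monotone cone `M = {θ : θ₁ ≤ … ≤ θ_d}` of `‖y − u‖² + λ‖u‖²` equals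
`(1/(1+λ))‖y − Π_M(y)‖² + (λ/(1+λ))‖y‖²`, where `Π_M(y)` is the Euclidean projection
of `y` onto `M`. -/
theorem regularized_isotonic_closed_form
    (d : ℕ) (y p : EuclideanSpace ℝ (Fin d)) (lam : ℝ) (hlam : 0 ≤ lam)
    (M : Set (EuclideanSpace ℝ (Fin d)))
    (hM : M = {θ : EuclideanSpace ℝ (Fin d) | ∀ i j : Fin d, i ≤ j → θ i ≤ θ j})
    (hpM : p ∈ M)
    (hproj : ∀ u ∈ M, ‖y - p‖ ≤ ‖y - u‖) :
    IsLeast {v : ℝ | ∃ u ∈ M, v = ‖y - u‖ ^ 2 + lam * ‖u‖ ^ 2}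
      (1 / (1 + lam) * ‖y - p‖ ^ 2 + lam / (1 + lam) * ‖y‖ ^ 2) := by
  set c : ℝ := 1 + lam with hc
  have hcpos : (0:ℝ) < c := by positivity
  have hcne : c ≠ 0 := ne_of_gt hcpos
  -- scaling by a nonneg scalar preserves membership in M
  have hscale : ∀ (t : ℝ), 0 ≤ t → ∀ u ∈ M, t • u ∈ M := by
    intro t ht u hu
    rw [hM] at hu ⊢
    intro i j hij
    have := hu i j hij
    simpa [PiLp.smul_apply, smul_eq_mul] using mul_le_mul_of_nonneg_left this ht
  -- key identity
  have key : ∀ u : EuclideanSpace ℝ (Fin d),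
      ‖y - u‖ ^ 2 + lam * ‖u‖ ^ 2
        = 1 / c * ‖y - c • u‖ ^ 2 + lam / c * ‖y‖ ^ 2 := by
    intro u
    have h1 : ‖y - u‖ ^ 2 = ‖y‖ ^ 2 - 2 * inner ℝ y u + ‖u‖ ^ 2 := by
      rw [norm_sub_sq_real]
    have h2 : ‖y - c • u‖ ^ 2 = ‖y‖ ^ 2 - 2 * (c * inner ℝ y u) + c ^ 2 * ‖u‖ ^ 2 := by
      rw [norm_sub_sq_real, real_inner_smul_right, norm_smul]
      rw [Real.norm_eq_abs, abs_of_pos hcpos]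
      ring
    rw [h1, h2]
    field_simp
    ring
  constructor
  · -- membership: attained at c⁻¹ • p
    refine ⟨c⁻¹ • p, hscale c⁻¹ (by positivity) p hpM, ?_⟩
    have := key (c⁻¹ • p)
    rw [this, smul_smul, mul_inv_cancel₀ hcne, one_smul]
  · -- lower bound
    rintro v ⟨u, hu, rfl⟩
    rw [key u]
    have hcu : c • u ∈ M := hscale c (le_of_lt hcpos) u hu
    have h := hproj (c • u) hcu
    have hsq : ‖y - p‖ ^ 2 ≤ ‖y - c • u‖ ^ 2 :=
      pow_le_pow_left₀ (norm_nonneg _) h 2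
    have h1 : 1 / c * ‖y - p‖ ^ 2 ≤ 1 / c * ‖y - c • u‖ ^ 2 := by
      apply mul_le_mul_of_nonneg_left hsq
      positivity
    linarith
end

section
/- For any y ∈ R^d and any λ ≥ 0, the minimizer over the monotone cone M of ‖y − u‖² + λ‖u‖² equals the minimizer over M of ‖Π_M(y) − u‖² + λ‖u‖²; in particular the minimizer is (1/(1+λ))·Π_M(y). -/
/-- For any `y ∈ ℝ^d` and `λ ≥ 0`, the minimizers over the monotone
cone `M` of `‖y − u‖² + λ‖u‖²` coincide with the minimizers over `M` of
`‖Π_M(y) − u‖² + λ‖u‖²`; in particular `(1/(1+λ)) • Π_M(y)` is a minimizer. -/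
theorem regularized_isotonic_argmin_eq
    (d : ℕ) (y p : EuclideanSpace ℝ (Fin d)) (lam : ℝ) (hlam : 0 ≤ lam)
    (M : Set (EuclideanSpace ℝ (Fin d)))
    (hM : M = {θ : EuclideanSpace ℝ (Fin d) | ∀ i j : Fin d, i ≤ j → θ i ≤ θ j})
    (hpM : p ∈ M)
    (hproj : ∀ u ∈ M, ‖y - p‖ ≤ ‖y - u‖) :
    {u | u ∈ M ∧ ∀ v ∈ M, ‖y - u‖ ^ 2 + lam * ‖u‖ ^ 2 ≤ ‖y - v‖ ^ 2 + lam * ‖v‖ ^ 2}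
      = {u | u ∈ M ∧ ∀ v ∈ M, ‖p - u‖ ^ 2 + lam * ‖u‖ ^ 2 ≤ ‖p - v‖ ^ 2 + lam * ‖v‖ ^ 2}
    ∧ (1 / (1 + lam)) • p ∈
        {u | u ∈ M ∧ ∀ v ∈ M, ‖y - u‖ ^ 2 + lam * ‖u‖ ^ 2 ≤ ‖y - v‖ ^ 2 + lam * ‖v‖ ^ 2} := by
  have h1lam : (0:ℝ) < 1 + lam := by linarith
  set c : ℝ := 1 / (1 + lam) with hc
  have hcpos : 0 < c := by positivity
  have hc1 : c * (1 + lam) = 1 := by rw [hc]; field_simp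
  -- cone membership facts
  have hsmul_mem : ∀ (t : ℝ), 0 ≤ t → ∀ u ∈ M, t • u ∈ M := by
    intro t ht u hu
    rw [hM] at hu ⊢
    intro i j hij
    have := hu i j hij
    simpa using mul_le_mul_of_nonneg_left this ht
  have hadd_mem : ∀ u ∈ M, ∀ v ∈ M, u + v ∈ M := by
    intro u hu v hv
    rw [hM] at hu hv ⊢
    intro i j hij
    have h1 := hu i j hij
    have h2 := hv i j hij
    simpa using add_le_add h1 h2
  -- squared projection inequality
  have hproj2 : ∀ u ∈ M, ‖y - p‖ ^ 2 ≤ ‖y - u‖ ^ 2 := by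
    intro u hu
    exact pow_le_pow_left₀ (norm_nonneg _) (hproj u hu) 2
  -- variational inequality: ⟪y - p, w⟫ ≤ 0 for all w ∈ M
  have hVI : ∀ w ∈ M, (inner ℝ (y - p) w : ℝ) ≤ 0 := by
    intro w hw
    have ht : ∀ t : ℝ, 0 ≤ t → 2 * t * (inner ℝ (y - p) w : ℝ) ≤ t ^ 2 * ‖w‖ ^ 2 := by
      intro t ht
      have hmem : p + t • w ∈ M := hadd_mem p hpM _ (hsmul_mem t ht w hw)
      have h2 := hproj2 _ hmem
      have hrw : y - (p + t • w) = (y - p) - t • w := by abel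
      have key : ‖(y - p) - t • w‖ ^ 2
          = ‖y - p‖ ^ 2 - 2 * (t * (inner ℝ (y - p) w : ℝ)) + t ^ 2 * ‖w‖ ^ 2 := by
        rw [norm_sub_sq_real (y - p) (t • w), real_inner_smul_right, norm_smul,
          Real.norm_eq_abs, mul_pow, sq_abs]
      rw [hrw, key] at h2
      linarith
    by_contra h
    push_neg at h
    have hw0 : w ≠ 0 := by
      intro h0; rw [h0] at h; simp at h
    have hwn : (0:ℝ) < ‖w‖ ^ 2 := pow_pos (norm_pos_iff.mpr hw0) 2
    set a := (inner ℝ (y - p) w : ℝ) with ha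
    have hs : 0 < a / ‖w‖ ^ 2 := div_pos h hwn
    have hthis := ht (a / ‖w‖ ^ 2) hs.le
    have e : (a / ‖w‖ ^ 2) ^ 2 * ‖w‖ ^ 2 = a * (a / ‖w‖ ^ 2) := by
      field_simp
    rw [e] at hthis
    nlinarith [mul_pos hs h]
  -- ⟪y - p, p⟫ = 0
  have hpp : (inner ℝ (y - p) p : ℝ) = 0 := by
    have hle : (inner ℝ (y - p) p : ℝ) ≤ 0 := hVI p hpM
    have hge : 0 ≤ (inner ℝ (y - p) p : ℝ) := by
      by_contra h
      push_neg at h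
      have hp0 : p ≠ 0 := by
        intro h0; rw [h0] at h; simp at h
      have hpn : (0:ℝ) < ‖p‖ ^ 2 := pow_pos (norm_pos_iff.mpr hp0) 2
      set a := (inner ℝ (y - p) p : ℝ) with ha
      set t : ℝ := min 1 (-a / ‖p‖ ^ 2) with htdef
      have ht0 : 0 < t := lt_min one_pos (div_pos (by linarith) hpn)
      have ht1 : t ≤ 1 := min_le_left _ _
      have ht2 : t ≤ -a / ‖p‖ ^ 2 := min_le_right _ _
      have hmem : (1 - t) • p ∈ M := hsmul_mem (1 - t) (by linarith) p hpM
      have h2 := hproj2 _ hmem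
      have hrw : y - (1 - t) • p = (y - p) + t • p := by
        rw [sub_smul, one_smul]; abel
      have key : ‖(y - p) + t • p‖ ^ 2
          = ‖y - p‖ ^ 2 + 2 * (t * a) + t ^ 2 * ‖p‖ ^ 2 := by
        rw [norm_add_sq_real, real_inner_smul_right, norm_smul,
          Real.norm_eq_abs, mul_pow, sq_abs, ha]
      rw [hrw, key] at h2
      have ht3 : t * ‖p‖ ^ 2 ≤ -a := (le_div_iff₀ hpn).mp ht2
      nlinarith [mul_le_mul_of_nonneg_left ht3 ht0.le, mul_pos ht0 (neg_pos.mpr h)]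
    linarith
  -- expansion of ‖y - v‖²
  have hexp : ∀ v : EuclideanSpace ℝ (Fin d),
      ‖y - v‖ ^ 2 = ‖y - p‖ ^ 2 + ‖p - v‖ ^ 2 - 2 * (inner ℝ (y - p) v : ℝ) := by
    intro v
    have hrw : y - v = (y - p) + (p - v) := by abel
    rw [hrw, norm_add_sq_real, inner_sub_right, hpp]
    ring
  -- expansion of the regularized objective around c • p
  have hg : ∀ v : EuclideanSpace ℝ (Fin d),
      ‖p - v‖ ^ 2 + lam * ‖v‖ ^ 2
        = (1 + lam) * ‖v - c • p‖ ^ 2 + (lam / (1 + lam)) * ‖p‖ ^ 2 := by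
    intro v
    have e1 : ‖p - v‖ ^ 2 = ‖p‖ ^ 2 - 2 * (inner ℝ p v : ℝ) + ‖v‖ ^ 2 :=
      norm_sub_sq_real p v
    have e2 : ‖v - c • p‖ ^ 2 = ‖v‖ ^ 2 - 2 * (c * (inner ℝ v p : ℝ)) + c ^ 2 * ‖p‖ ^ 2 := by
      rw [norm_sub_sq_real v (c • p), real_inner_smul_right, norm_smul,
        Real.norm_eq_abs, mul_pow, sq_abs]
    have e3 : (inner ℝ v p : ℝ) = (inner ℝ p v : ℝ) := real_inner_comm _ _
    rw [e1, e2, e3]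
    have hlamne : (1 + lam) ≠ 0 := ne_of_gt h1lam
    rw [hc]
    field_simp
    ring
  -- inner product of y - p with c • p vanishes
  have hcp0 : (inner ℝ (y - p) (c • p) : ℝ) = 0 := by
    rw [real_inner_smul_right, hpp, mul_zero]
  have hcpM : c • p ∈ M := hsmul_mem c (le_of_lt hcpos) p hpM
  -- c•p minimizes the second objective, uniquely
  have hgmin : ∀ v ∈ M, ‖p - c • p‖ ^ 2 + lam * ‖c • p‖ ^ 2
      ≤ ‖p - v‖ ^ 2 + lam * ‖v‖ ^ 2 := by
    intro v hv
    have h1 := hg v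
    have h2 := hg (c • p)
    have h3 : ‖c • p - c • p‖ = 0 := by simp
    rw [h3] at h2
    have h4 : (0:ℝ) ≤ (1 + lam) * ‖v - c • p‖ ^ 2 := by positivity
    norm_num at h2
    linarith
  have hgeq : ∀ u : EuclideanSpace ℝ (Fin d),
      ‖p - u‖ ^ 2 + lam * ‖u‖ ^ 2 ≤ ‖p - c • p‖ ^ 2 + lam * ‖c • p‖ ^ 2 → u = c • p := by
    intro u hle
    have h1 := hg u
    have h2 := hg (c • p)
    have h3 : ‖c • p - c • p‖ = 0 := by simp
    rw [h3] at h2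
    norm_num at h2
    have h7 : (1 + lam) * ‖u - c • p‖ ^ 2 ≤ (1 + lam) * 0 := by
      rw [mul_zero]; linarith
    have h8 : ‖u - c • p‖ ^ 2 ≤ 0 := le_of_mul_le_mul_left h7 h1lam
    have hnn : (0:ℝ) ≤ ‖u - c • p‖ ^ 2 := by positivity
    have h9 : ‖u - c • p‖ ^ 2 = 0 := le_antisymm h8 hnn
    have h10 : ‖u - c • p‖ = 0 := pow_eq_zero_iff (n := 2) (by norm_num) |>.mp h9
    exact sub_eq_zero.mp (norm_eq_zero.mp h10)
  -- c•p minimizes the first objective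
  have hfcp : ∀ v ∈ M, ‖y - c • p‖ ^ 2 + lam * ‖c • p‖ ^ 2
      ≤ ‖y - v‖ ^ 2 + lam * ‖v‖ ^ 2 := by
    intro v hv
    rw [hexp v, hexp (c • p), hcp0]
    have h1 := hgmin v hv
    have h2 := hVI v hv
    linarith
  -- any minimizer of the first objective equals c•p
  have hfeq : ∀ u ∈ M, (∀ v ∈ M, ‖y - u‖ ^ 2 + lam * ‖u‖ ^ 2 ≤ ‖y - v‖ ^ 2 + lam * ‖v‖ ^ 2)
      → u = c • p := by
    intro u hu hmin
    have h1 := hmin (c • p) hcpM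
    rw [hexp u, hexp (c • p), hcp0] at h1
    have h2 := hVI u hu
    exact hgeq u (by linarith)
  constructor
  · ext u
    simp only [Set.mem_setOf_eq]
    constructor
    · rintro ⟨huM, hmin⟩
      have hueq := hfeq u huM hmin
      subst hueq
      exact ⟨hcpM, hgmin⟩
    · rintro ⟨huM, hmin⟩
      have hueq := hgeq u (hmin (c • p) hcpM)
      subst hueq
      exact ⟨hcpM, hfcp⟩
  · exact ⟨hcpM, hfcp⟩
end

section
/- Let Ω be a nonempty subset of index pairs and let (x̂, B̂) minimize ‖Y − x𝟙ᵀ − B‖_Ω² + λ‖B‖_Ω² subject to B satisfying ordering constraints O, for any λ ∈ [0, ∞]. Then max_{(i,j)∈Ω} |B̂_{ij}| ≤ max_{(i,j)∈Ω} |y_{ij}| + ‖x̂‖_∞. -/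
open scoped BigOperators ENNReal

/-- `B` satisfies the partial-ordering constraints `O` on its entries. -/
def SatisfiesPO {d n : ℕ} (O : Set ((Fin d × Fin n) × (Fin d × Fin n)))
    (B : Matrix (Fin d) (Fin n) ℝ) : Prop :=
  ∀ c ∈ O, B c.1.1 c.1.2 ≤ B c.2.1 c.2.2

/-- The penalized objective restricted to a set `Ω` of entries:
`‖Y − x𝟙ᵀ − B‖_Ω² + λ‖B‖_Ω²`, with `λ ∈ [0, ∞]` in the extended nonnegative
reals. -/
noncomputable def estObjOn {d n : ℕ} (S : Finset (Fin d × Fin n))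
    (Y : Matrix (Fin d) (Fin n) ℝ) (lam : ℝ≥0∞)
    (x : Fin d → ℝ) (B : Matrix (Fin d) (Fin n) ℝ) : ℝ≥0∞ :=
  ENNReal.ofReal (∑ p ∈ S, (Y p.1 p.2 - x p.1 - B p.1 p.2) ^ 2)
    + lam * ENNReal.ofReal (∑ p ∈ S, (B p.1 p.2) ^ 2)
private lemma clamp_sq_le (M b : ℝ) (hM : 0 ≤ M) : (max (-M) (min M b))^2 ≤ b^2 := by
  rcases le_total M b with h | h
  · rw [min_eq_left h, max_eq_right (by linarith)]
    nlinarith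
  · rcases le_total b (-M) with h2 | h2
    · rw [min_eq_right h, max_eq_left h2]
      nlinarith
    · rw [min_eq_right h, max_eq_right h2]

private lemma clamp_dist_sq_le (M a b : ℝ) (ha : |a| ≤ M) :
    (a - max (-M) (min M b))^2 ≤ (a - b)^2 := by
  have h1 : -M ≤ a := neg_le_of_abs_le ha
  have h2 : a ≤ M := le_of_abs_le ha
  rcases le_total M b with h | h
  · rw [min_eq_left h, max_eq_right (by linarith)]
    nlinarith
  · rcases le_total b (-M) with h3 | h3
    · rw [min_eq_right h, max_eq_left h3]
      nlinarith
    · rw [min_eq_right h, max_eq_right h3]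

/-- Let `Ω` be a nonempty set of index pairs and let `(x̂, B̂)`
minimize `‖Y − x𝟙ᵀ − B‖_Ω² + λ‖B‖_Ω²` subject to `B` satisfying `O` (ties broken by
minimal Frobenius norm of `B`), for any `λ ∈ [0, ∞]`.  Then
`max_{(i,j)∈Ω} |B̂_{ij}| ≤ max_{(i,j)∈Ω} |y_{ij}| + ‖x̂‖_∞`. -/
theorem estimator_bias_bound_given_x
    (d n : ℕ)
    (S : Finset (Fin d × Fin n)) (hS : S.Nonempty)
    (Y : Matrix (Fin d) (Fin n) ℝ)
    (O : Set ((Fin d × Fin n) × (Fin d × Fin n)))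
    (lam : ℝ≥0∞)
    (xhat : Fin d → ℝ) (Bhat : Matrix (Fin d) (Fin n) ℝ)
    (hsat : SatisfiesPO O Bhat)
    (hmin : ∀ (x : Fin d → ℝ) (B : Matrix (Fin d) (Fin n) ℝ), SatisfiesPO O B →
      estObjOn S Y lam xhat Bhat ≤ estObjOn S Y lam x B)
    (htie : ∀ (x : Fin d → ℝ) (B : Matrix (Fin d) (Fin n) ℝ), SatisfiesPO O B →
      estObjOn S Y lam x B = estObjOn S Y lam xhat Bhat →
      (∑ i, ∑ j, (Bhat i j) ^ 2) ≤ ∑ i, ∑ j, (B i j) ^ 2) :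
    ∀ p ∈ S, |Bhat p.1 p.2| ≤ S.sup' hS (fun q => |Y q.1 q.2|) + ⨆ i, |xhat i| := by
  obtain ⟨p0, hp0⟩ := hS
  haveI : Nonempty (Fin d) := ⟨p0.1⟩
  set M : ℝ := S.sup' ⟨p0, hp0⟩ (fun q => |Y q.1 q.2|) + ⨆ i, |xhat i| with hMdef
  have hsup : ∀ i, |xhat i| ≤ ⨆ i, |xhat i| := fun i =>
    le_ciSup (f := fun i => |xhat i|) (Set.Finite.bddAbove (Set.finite_range _)) i
  have hM0 : 0 ≤ M := by
    have h1 : 0 ≤ S.sup' ⟨p0, hp0⟩ (fun q => |Y q.1 q.2|) :=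
      le_trans (abs_nonneg _) (Finset.le_sup' (fun q => |Y q.1 q.2|) hp0)
    have h2 : (0:ℝ) ≤ ⨆ i, |xhat i| := le_trans (abs_nonneg _) (hsup p0.1)
    linarith
  have hYx : ∀ p ∈ S, |Y p.1 p.2 - xhat p.1| ≤ M := by
    intro p hp
    calc |Y p.1 p.2 - xhat p.1| ≤ |Y p.1 p.2| + |xhat p.1| := abs_sub _ _
    _ ≤ M := add_le_add (Finset.le_sup' (fun q => |Y q.1 q.2|) hp) (hsup p.1)
  set B' : Matrix (Fin d) (Fin n) ℝ := fun i j => max (-M) (min M (Bhat i j)) with hB'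
  have hsat' : SatisfiesPO O B' := fun c hc =>
    max_le_max le_rfl (min_le_min le_rfl (hsat c hc))
  have hobj : estObjOn S Y lam xhat B' ≤ estObjOn S Y lam xhat Bhat := by
    unfold estObjOn
    refine add_le_add (ENNReal.ofReal_le_ofReal ?_)
      (mul_le_mul_right (ENNReal.ofReal_le_ofReal ?_) lam)
    · exact Finset.sum_le_sum fun p hp => clamp_dist_sq_le M _ _ (hYx p hp)
    · exact Finset.sum_le_sum fun p _ => clamp_sq_le M _ hM0
  have heq : estObjOn S Y lam xhat B' = estObjOn S Y lam xhat Bhat :=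
    le_antisymm hobj (hmin xhat B' hsat')
  have hsum : (∑ i, ∑ j, (Bhat i j) ^ 2) ≤ ∑ i, ∑ j, (B' i j) ^ 2 :=
    htie xhat B' hsat' heq
  have hsum' : (∑ i, ∑ j, (B' i j) ^ 2) ≤ ∑ i, ∑ j, (Bhat i j) ^ 2 :=
    Finset.sum_le_sum fun i _ => Finset.sum_le_sum fun j _ => clamp_sq_le M _ hM0
  have hsumeq : (∑ i, ∑ j, ((Bhat i j) ^ 2 - (B' i j) ^ 2)) = 0 := by
    rw [Finset.sum_congr rfl (fun i _ => Finset.sum_sub_distrib _ _),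
      Finset.sum_sub_distrib]
    linarith
  have hentry : ∀ i j, (Bhat i j) ^ 2 - (B' i j) ^ 2 = 0 := by
    intro i j
    have h := (Finset.sum_eq_zero_iff_of_nonneg (fun i _ =>
      Finset.sum_nonneg fun j _ => sub_nonneg.mpr (clamp_sq_le M _ hM0))).mp hsumeq
      i (Finset.mem_univ i)
    exact (Finset.sum_eq_zero_iff_of_nonneg (fun j _ =>
      sub_nonneg.mpr (clamp_sq_le M _ hM0))).mp h j (Finset.mem_univ j)
  intro p hp
  have h2 : (Bhat p.1 p.2) ^ 2 = (B' p.1 p.2) ^ 2 := by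
    have := hentry p.1 p.2; linarith
  have habs : |Bhat p.1 p.2| = |B' p.1 p.2| := by
    rw [← Real.sqrt_sq_eq_abs, ← Real.sqrt_sq_eq_abs, h2]
  show |Bhat p.1 p.2| ≤ M
  rw [habs]
  exact abs_le.mpr ⟨le_max_left _ _, max_le (by linarith) (min_le_left _ _)⟩
end

section
/- Consider d = 2 courses, r = 2 groups, no noise, and observations Y = x*𝟙ᵀ + B where B satisfies the group ordering (every entry of group 1 is at most every entry of group 2). Then the solution of the estimator at λ = 0 satisfies x̂ = ȳ·(1,1) + (γ/2)·(−1, 1), where ȳ is the grand mean of Y and γ equals: y_{2,2,min} − y_{1,1,max} if this quantity is less than ȳ₂ − ȳ₁; y_{2,1,max} − y_{1,2,min} if this quantity is greater than ȳ₂ − ȳ₁; and ȳ₂ − ȳ₁ otherwise. Here y_{i,k,max/min} denote the max/min observation in course i among entries of group k, and ȳ_i is the mean of row i. -/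
open scoped BigOperators

lemma aux_quad (u0 u1 g : ℝ) (hg : 0 ≤ g) (hd : g ≤ u0 - u1)
    (hA : u0^2 + u1^2 ≤ g^2/2) : u0 = g/2 ∧ u1 = -(g/2) := by
  have h1 : g^2 ≤ (u0-u1)^2 := by nlinarith
  have h2 : (u0+u1)^2 ≤ 0 := by nlinarith
  have h3 : u0 + u1 = 0 := by nlinarith [sq_nonneg (u0+u1)]
  have h4 : u0 - u1 = g := by nlinarith [mul_nonneg (sub_nonneg.mpr hd) hg]
  constructor <;> linarith

lemma sq_sum_zero (u v : ℝ) (h : u^2 + v^2 ≤ 0) : u = 0 ∧ v = 0 := by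
  constructor <;> nlinarith [sq_nonneg u, sq_nonneg v]

lemma expand_sum (n : ℕ) (f : Fin n → ℝ) (x : ℝ) :
    ∑ j, (f j - x) ^ 2 = (∑ j, (f j)^2) - 2 * x * (∑ j, f j) + n * x ^ 2 := by
  have h : ∀ j, (f j - x) ^ 2 = (f j)^2 - 2*x*(f j) + x^2 := fun j => by ring
  simp_rw [h]
  rw [Finset.sum_add_distrib, Finset.sum_sub_distrib, ← Finset.mul_sum,
    Finset.sum_const, Finset.card_univ, Fintype.card_fin, nsmul_eq_mul]

set_option maxHeartbeats 1000000 in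
/-- Two courses (`d = 2`), two groups (`r = 2`), no noise:
`Y = x*𝟙ᵀ + B` where `B` satisfies the group ordering (every group-1 entry is at most
every group-2 entry).  The solution of the estimator at `λ = 0` (minimizing
`‖Y − x𝟙ᵀ − B‖_F²` over `x` and group-ordered `B`, ties broken by minimal `‖B‖_F²`)
is `x̂ = ȳ·(1,1) + (γ/2)·(−1,1)`, where `ȳ` is the grand mean, `ȳᵢ` the row means,
and `γ` is given by the three-case formula in terms of the extremal observations
`y_{i,k,max}`, `y_{i,k,min}` of each course-group block. -/
theorem closed_form_two_courses_two_groups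
    (n : ℕ) (hn : 0 < n)
    (group : Fin 2 × Fin n → Fin 2)
    (hgroups : ∀ (i : Fin 2) (k : Fin 2), ∃ j : Fin n, group (i, j) = k)
    (xstar : Fin 2 → ℝ)
    (B : Matrix (Fin 2) (Fin n) ℝ)
    (hB : ∀ (p q : Fin 2 × Fin n), group p = 0 → group q = 1 → B p.1 p.2 ≤ B q.1 q.2)
    (Y : Matrix (Fin 2) (Fin n) ℝ)
    (hY : Y = fun i j => xstar i + B i j)
    -- extremal observations of each course-group block
    (y11max : ℝ) (h11max : IsGreatest {v | ∃ j, group (0, j) = 0 ∧ v = Y 0 j} y11max)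
    (y12min : ℝ) (h12min : IsLeast {v | ∃ j, group (0, j) = 1 ∧ v = Y 0 j} y12min)
    (y21max : ℝ) (h21max : IsGreatest {v | ∃ j, group (1, j) = 0 ∧ v = Y 1 j} y21max)
    (y22min : ℝ) (h22min : IsLeast {v | ∃ j, group (1, j) = 1 ∧ v = Y 1 j} y22min)
    -- the solution of the estimator at λ = 0
    (xhat : Fin 2 → ℝ) (Bhat : Matrix (Fin 2) (Fin n) ℝ)
    (hsat : ∀ (p q : Fin 2 × Fin n), group p = 0 → group q = 1 →
      Bhat p.1 p.2 ≤ Bhat q.1 q.2)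
    (hmin : ∀ (x : Fin 2 → ℝ) (B' : Matrix (Fin 2) (Fin n) ℝ),
      (∀ (p q : Fin 2 × Fin n), group p = 0 → group q = 1 → B' p.1 p.2 ≤ B' q.1 q.2) →
      (∑ i, ∑ j, (Y i j - xhat i - Bhat i j) ^ 2) ≤ ∑ i, ∑ j, (Y i j - x i - B' i j) ^ 2)
    (htie : ∀ (x : Fin 2 → ℝ) (B' : Matrix (Fin 2) (Fin n) ℝ),
      (∀ (p q : Fin 2 × Fin n), group p = 0 → group q = 1 → B' p.1 p.2 ≤ B' q.1 q.2) →
      (∑ i, ∑ j, (Y i j - x i - B' i j) ^ 2) = (∑ i, ∑ j, (Y i j - xhat i - Bhat i j) ^ 2) →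
      (∑ i, ∑ j, (Bhat i j) ^ 2) ≤ ∑ i, ∑ j, (B' i j) ^ 2) :
    -- conclusion: the closed form
    let ybar : ℝ := (∑ i, ∑ j, Y i j) / (2 * n)
    let ybar1 : ℝ := (∑ j, Y 0 j) / n
    let ybar2 : ℝ := (∑ j, Y 1 j) / n
    let γ : ℝ :=
      if y22min - y11max < ybar2 - ybar1 then y22min - y11max
      else if ybar2 - ybar1 < y21max - y12min then y21max - y12min
      else ybar2 - ybar1
    xhat 0 = ybar - γ / 2 ∧ xhat 1 = ybar + γ / 2 := by
  intro ybar ybar1 ybar2 γ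
  have hγdef : γ = (if y22min - y11max < ybar2 - ybar1 then y22min - y11max
      else if ybar2 - ybar1 < y21max - y12min then y21max - y12min
      else ybar2 - ybar1) := rfl
  have hybardef : ybar = (∑ i, ∑ j, Y i j) / (2 * n) := rfl
  have hybar1def : ybar1 = (∑ j, Y 0 j) / n := rfl
  have hybar2def : ybar2 = (∑ j, Y 1 j) / n := rfl
  clear_value ybar ybar1 ybar2 γ
  have hn' : (0:ℝ) < (n:ℝ) := by exact_mod_cast hn
  have hYe : ∀ i j, Y i j = xstar i + B i j := fun i j => by rw [hY]
  -- Step 1: residual at the optimum is zero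
  have hminzero : (∑ i, ∑ j, (Y i j - xhat i - Bhat i j) ^ 2) ≤ 0 := by
    have h0 := hmin xstar B hB
    have hz : (∑ i, ∑ j, (Y i j - xstar i - B i j) ^ 2) = 0 := by
      subst hY; simp
    linarith
  have h0hat : (∑ i, ∑ j, (Y i j - xhat i - Bhat i j) ^ 2) = 0 :=
    le_antisymm hminzero (by positivity)
  have hres : ∀ i j, Bhat i j = Y i j - xhat i := by
    intro i j
    have h1 : ∀ i ∈ (Finset.univ : Finset (Fin 2)),
        (0:ℝ) ≤ ∑ j, (Y i j - xhat i - Bhat i j) ^ 2 :=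
      fun i _ => Finset.sum_nonneg fun j _ => sq_nonneg _
    have h2 : (∑ j, (Y i j - xhat i - Bhat i j) ^ 2)
        ≤ ∑ i, ∑ j, (Y i j - xhat i - Bhat i j) ^ 2 :=
      Finset.single_le_sum h1 (Finset.mem_univ i)
    have h3 : (Y i j - xhat i - Bhat i j) ^ 2 ≤ ∑ j, (Y i j - xhat i - Bhat i j) ^ 2 :=
      Finset.single_le_sum (fun j _ => sq_nonneg (Y i j - xhat i - Bhat i j)) (Finset.mem_univ j)
    nlinarith [sq_nonneg (Y i j - xhat i - Bhat i j)]
  -- witnesses of the extremal values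
  obtain ⟨a, hga, hva⟩ := h11max.1
  obtain ⟨b, hgb, hvb⟩ := h12min.1
  obtain ⟨e, hge, hve⟩ := h21max.1
  obtain ⟨d, hgd, hvd⟩ := h22min.1
  -- the interval is nonempty
  have hLU : y21max - y12min ≤ y22min - y11max := by
    have h1 := hB (1,e) (0,b) hge hgb
    have h2 := hB (0,a) (1,d) hga hgd
    simp only at h1 h2
    have e1 := hYe 1 e; have e2 := hYe 0 b; have e3 := hYe 0 a; have e4 := hYe 1 d
    linarith [hva, hvb, hve, hvd]
  -- the optimum is feasible for the interval
  have hU : xhat 1 - xhat 0 ≤ y22min - y11max := by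
    have h1 := hsat (0,a) (1,d) hga hgd
    simp only at h1
    rw [hres 0 a, hres 1 d] at h1
    linarith [hva, hvd]
  have hL : y21max - y12min ≤ xhat 1 - xhat 0 := by
    have h1 := hsat (1,e) (0,b) hge hgb
    simp only at h1
    rw [hres 1 e, hres 0 b] at h1
    linarith [hve, hvb]
  have hγL : y21max - y12min ≤ γ := by
    rw [hγdef]; split_ifs with h1 h2 <;> linarith
  have hγU : γ ≤ y22min - y11max := by
    rw [hγdef]; split_ifs with h1 h2 <;> linarith
  -- the candidate
  set c : Fin 2 → ℝ := ![ybar - γ/2, ybar + γ/2] with hc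
  have hc0 : c 0 = ybar - γ/2 := rfl
  have hc1 : c 1 = ybar + γ/2 := rfl
  set Bc : Matrix (Fin 2) (Fin n) ℝ := fun i j => Y i j - c i with hBc
  have htwo : ∀ i : Fin 2, i = 0 ∨ i = 1 := by decide
  have hfeas : ∀ (p q : Fin 2 × Fin n), group p = 0 → group q = 1 →
      Bc p.1 p.2 ≤ Bc q.1 q.2 := by
    rintro ⟨pi, pj⟩ ⟨qi, qj⟩ hp hq
    show Y pi pj - c pi ≤ Y qi qj - c qi
    rcases htwo pi with rfl | rfl <;> rcases htwo qi with rfl | rfl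
    · have h1 := hB (0,pj) (0,qj) hp hq
      simp only at h1
      have e1 := hYe 0 pj; have e2 := hYe 0 qj
      rw [hc0]; linarith
    · have h1 : Y 0 pj ≤ y11max := h11max.2 ⟨pj, hp, rfl⟩
      have h2 : y22min ≤ Y 1 qj := h22min.2 ⟨qj, hq, rfl⟩
      rw [hc0, hc1]; linarith
    · have h1 : Y 1 pj ≤ y21max := h21max.2 ⟨pj, hp, rfl⟩
      have h2 : y12min ≤ Y 0 qj := h12min.2 ⟨qj, hq, rfl⟩
      rw [hc0, hc1]; linarith
    · have h1 := hB (1,pj) (1,qj) hp hq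
      simp only at h1
      have e1 := hYe 1 pj; have e2 := hYe 1 qj
      rw [hc1]; linarith
  -- apply the tie-breaking property
  have h0c : (∑ i, ∑ j, (Y i j - c i - Bc i j) ^ 2) = 0 := by
    simp [hBc]
  have hkey := htie c Bc hfeas (by rw [h0c, h0hat])
  rw [Fin.sum_univ_two, Fin.sum_univ_two] at hkey
  have hkey2 : (∑ j, (Y 0 j - xhat 0)^2) + (∑ j, (Y 1 j - xhat 1)^2)
      ≤ (∑ j, (Y 0 j - c 0)^2) + (∑ j, (Y 1 j - c 1)^2) := by
    have e1 : ∀ (i : Fin 2), (∑ j, (Bhat i j)^2) = ∑ j, (Y i j - xhat i)^2 := by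
      intro i; exact Finset.sum_congr rfl fun j _ => by rw [hres i j]
    have e2 : ∀ (i : Fin 2), (∑ j, (Bc i j)^2) = ∑ j, (Y i j - c i)^2 := by
      intro i; rfl
    rw [← e1 0, ← e1 1, ← e2 0, ← e2 1]; exact hkey
  rw [expand_sum n (Y 0) (xhat 0), expand_sum n (Y 1) (xhat 1),
    expand_sum n (Y 0) (c 0), expand_sum n (Y 1) (c 1)] at hkey2
  -- rewrite sums via row means
  have hs0 : (∑ j, Y 0 j) = n * ybar1 := by rw [hybar1def]; field_simp
  have hs1 : (∑ j, Y 1 j) = n * ybar2 := by rw [hybar2def]; field_simp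
  have hybar' : ybar = (ybar1 + ybar2) / 2 := by
    rw [hybardef, Fin.sum_univ_two, hs0, hs1]; field_simp
  rw [hs0, hs1, hc0, hc1, hybar'] at hkey2
  clear_value c Bc
  -- divide by n
  have hA : (xhat 0)^2 - 2 * xhat 0 * ybar1 + (xhat 1)^2 - 2 * xhat 1 * ybar2
      ≤ ((ybar1+ybar2)/2 - γ/2)^2 - 2 * ((ybar1+ybar2)/2 - γ/2) * ybar1
        + ((ybar1+ybar2)/2 + γ/2)^2 - 2 * ((ybar1+ybar2)/2 + γ/2) * ybar2 := by
    have hmul : (n:ℝ) * ((xhat 0)^2 - 2 * xhat 0 * ybar1 + (xhat 1)^2 - 2 * xhat 1 * ybar2)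
        ≤ (n:ℝ) * (((ybar1+ybar2)/2 - γ/2)^2 - 2 * ((ybar1+ybar2)/2 - γ/2) * ybar1
          + ((ybar1+ybar2)/2 + γ/2)^2 - 2 * ((ybar1+ybar2)/2 + γ/2) * ybar2) := by
      linarith [hkey2]
    exact le_of_mul_le_mul_left hmul hn'
  have hA' : (xhat 0 - ybar1)^2 + (xhat 1 - ybar2)^2 ≤ ((ybar2 - ybar1) - γ)^2 / 2 := by
    nlinarith [hA, sq_nonneg (ybar1 - ybar2)]
  rw [hybar']
  -- case analysis on γ
  rcases lt_trichotomy (y22min - y11max) (ybar2 - ybar1) with hcase | hcase | hcase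
  · -- γ = y22min - y11max, upper bound active
    have hγ : γ = y22min - y11max := by rw [hγdef, if_pos hcase]
    have hd : (ybar2 - ybar1) - γ ≤ (xhat 0 - ybar1) - (xhat 1 - ybar2) := by
      have : xhat 1 - xhat 0 ≤ γ := by rw [hγ]; exact hU
      linarith
    have hg : 0 ≤ (ybar2 - ybar1) - γ := by rw [hγ]; linarith
    obtain ⟨e1, e2⟩ := aux_quad (xhat 0 - ybar1) (xhat 1 - ybar2) ((ybar2 - ybar1) - γ)
      hg hd hA'
    constructor <;> [skip; skip] <;> linarith
  · -- γ = ybar2 - ybar1 (middle case, the "otherwise")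
    have hγ : γ = ybar2 - ybar1 := by
      rw [hγdef, if_neg (by rw [hcase]; exact lt_irrefl _)]
      rw [if_neg (by rw [← hcase]; linarith)]
    have h0 : (xhat 0 - ybar1)^2 + (xhat 1 - ybar2)^2 ≤ 0 := by
      rw [hγ] at hA'; linarith [hA']
    obtain ⟨e1, e2⟩ := sq_sum_zero _ _ h0
    constructor <;> [skip; skip] <;> rw [hγ] <;> linarith
  · -- not case 1; split on whether lower bound is active
    have hnot1 : ¬ (y22min - y11max < ybar2 - ybar1) := by linarith
    rcases lt_or_ge (ybar2 - ybar1) (y21max - y12min) with hcase2 | hcase2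
    · -- γ = y21max - y12min, lower bound active
      have hγ : γ = y21max - y12min := by rw [hγdef, if_neg hnot1, if_pos hcase2]
      have hd : γ - (ybar2 - ybar1) ≤ (xhat 1 - ybar2) - (xhat 0 - ybar1) := by
        have : γ ≤ xhat 1 - xhat 0 := by rw [hγ]; exact hL
        linarith
      have hg : 0 ≤ γ - (ybar2 - ybar1) := by rw [hγ]; linarith
      have hA'' : (xhat 1 - ybar2)^2 + (xhat 0 - ybar1)^2 ≤ (γ - (ybar2 - ybar1))^2 / 2 := by
        nlinarith [hA', sq_nonneg (ybar2 - ybar1 - γ)]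
      obtain ⟨e1, e2⟩ := aux_quad (xhat 1 - ybar2) (xhat 0 - ybar1) (γ - (ybar2 - ybar1))
        hg hd hA''
      constructor <;> [skip; skip] <;> linarith
    · -- γ = ybar2 - ybar1
      have hγ : γ = ybar2 - ybar1 := by
        rw [hγdef, if_neg hnot1, if_neg (not_lt.mpr hcase2)]
      have h0 : (xhat 0 - ybar1)^2 + (xhat 1 - ybar2)^2 ≤ 0 := by
        rw [hγ] at hA'; linarith [hA']
      obtain ⟨e1, e2⟩ := sq_sum_zero _ _ h0
      constructor <;> [skip; skip] <;> rw [hγ] <;> linarith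
end

section
/- Let Z ~ N(0, I_d) be a standard Gaussian vector in R^d. Then P( sup over unit vectors θ with θ_1 ≤ ... ≤ θ_d of θᵀZ ≤ d^{1/4} ) → 1 as d → ∞. -/
open MeasureTheory ProbabilityTheory Filter
open Finset
open scoped ENNReal NNReal

/-- Abel summation identity. -/
lemma my_abel (η P : ℕ → ℝ) (d : ℕ) :
    ∑ i ∈ range d, η i * (P (i+1) - P i)
      = ∑ m ∈ range d, (η m - η (m+1)) * P (m+1) + η d * P d - η 0 * P 0 := by
  induction d with
  | zero => simp
  | succ d ih =>
    rw [Finset.sum_range_succ, Finset.sum_range_succ, ih]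
    ring

/-- Envelope for a nonincreasing nonneg sequence with ℓ² norm at most one. -/
lemma my_envelope (η : ℕ → ℝ) (d : ℕ) (hmono : ∀ m, η (m+1) ≤ η m)
    (hnn : ∀ m, 0 ≤ η m) (hnorm : ∑ i ∈ range d, η i ^ 2 ≤ 1)
    {m : ℕ} (hm : m < d) : Real.sqrt (m+1) * η m ≤ 1 := by
  have hd : ∀ k l : ℕ, k ≤ l → η l ≤ η k := by
    intro k l hkl
    induction l with
    | zero => simp_all
    | succ l ih =>
      rcases Nat.lt_or_ge k (l+1) with h | h
      · exact (hmono l).trans (ih (by omega))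
      · have : k = l + 1 := le_antisymm hkl h
        simp [this]
  have h1 : (m+1 : ℝ) * η m ^ 2 ≤ ∑ i ∈ range (m+1), η i ^ 2 := by
    have : ∀ i ∈ range (m+1), η m ^ 2 ≤ η i ^ 2 := by
      intro i hi
      have := hd i m (by simpa using Nat.lt_succ_iff.mp (Finset.mem_range.mp hi))
      have h2 := hnn m
      nlinarith [hnn i]
    calc (m+1 : ℝ) * η m ^ 2 = ∑ _i ∈ range (m+1), η m ^ 2 := by
          simp [Finset.sum_const, mul_comm]
      _ ≤ _ := Finset.sum_le_sum this
  have h2 : ∑ i ∈ range (m+1), η i ^ 2 ≤ ∑ i ∈ range d, η i ^ 2 := by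
    apply Finset.sum_le_sum_of_subset_of_nonneg
    · exact Finset.range_subset_range.mpr hm
    · intro i _ _; positivity
  have h3 : (m+1 : ℝ) * η m ^ 2 ≤ 1 := h1.trans (h2.trans hnorm)
  have h4 : (Real.sqrt (m+1) * η m) ^ 2 ≤ 1 := by
    rw [mul_pow, Real.sq_sqrt (by positivity)]
    simpa using h3
  nlinarith [Real.sqrt_nonneg (m+1:ℝ), hnn m, h4]

/-- Core deterministic Abel-summation bound. -/
lemma my_core (d : ℕ) (η g : ℕ → ℝ) (lam : ℝ) (hlam : 0 ≤ lam)
    (hmono : ∀ m, η (m+1) ≤ η m) (hnn : ∀ m, 0 ≤ η m)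
    (hnorm : ∑ i ∈ range d, η i ^ 2 ≤ 1)
    (hP : ∀ m, 1 ≤ m → m ≤ d → |∑ i ∈ range m, g i| ≤ lam * Real.sqrt m) :
    ∑ i ∈ range d, η i * g i ≤ lam * ∑ m ∈ range d, (1:ℝ)/(m+1) := by
  set P : ℕ → ℝ := fun m => ∑ i ∈ range m, g i with hPdef
  have hP0 : P 0 = 0 := by simp [hPdef]
  have hstep : ∀ i, g i = P (i+1) - P i := by
    intro i; simp [hPdef, Finset.sum_range_succ]
  have hid : ∑ i ∈ range d, η i * g i
      = ∑ m ∈ range d, (η m - η (m+1)) * P (m+1) + η d * P d := by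
    calc ∑ i ∈ range d, η i * g i = ∑ i ∈ range d, η i * (P (i+1) - P i) := by
          refine Finset.sum_congr rfl fun i _ => by rw [hstep]
      _ = _ := by rw [my_abel]; simp [hP0]
  have hcoef : ∀ m, 0 ≤ η m - η (m+1) := fun m => sub_nonneg.mpr (hmono m)
  have hPle : ∀ m, 1 ≤ m → m ≤ d → P m ≤ lam * Real.sqrt m := fun m h1 h2 =>
    (le_abs_self _).trans (hP m h1 h2)
  have hbound : ∑ i ∈ range d, η i * g i
      ≤ lam * (∑ m ∈ range d, (η m - η (m+1)) * Real.sqrt (m+1) + η d * Real.sqrt d) := by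
    rw [hid]
    have hA : ∑ m ∈ range d, (η m - η (m+1)) * P (m+1)
        ≤ ∑ m ∈ range d, (η m - η (m+1)) * (lam * Real.sqrt (m+1)) := by
      apply Finset.sum_le_sum
      intro m hm
      have hmd := Finset.mem_range.mp hm
      have := hPle (m+1) (by omega) (by omega)
      have h' : P (m+1) ≤ lam * Real.sqrt ((m:ℝ)+1) := by push_cast at this ⊢; linarith
      exact mul_le_mul_of_nonneg_left h' (hcoef m)
    have hB : η d * P d ≤ η d * (lam * Real.sqrt d) := by
      rcases Nat.eq_zero_or_pos d with rfl | hd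
      · simp [hP0]
      · exact mul_le_mul_of_nonneg_left (hPle d hd le_rfl) (hnn d)
    calc ∑ m ∈ range d, (η m - η (m+1)) * P (m+1) + η d * P d
        ≤ ∑ m ∈ range d, (η m - η (m+1)) * (lam * Real.sqrt (m+1)) + η d * (lam * Real.sqrt d) :=
          add_le_add hA hB
      _ = lam * (∑ m ∈ range d, (η m - η (m+1)) * Real.sqrt (m+1) + η d * Real.sqrt d) := by
          rw [mul_add, Finset.mul_sum]
          congr 1
          · exact Finset.sum_congr rfl fun m _ => by ring
          · ring
  have hid2 : ∑ m ∈ range d, (η m - η (m+1)) * Real.sqrt (m+1) + η d * Real.sqrt d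
      = ∑ m ∈ range d, η m * (Real.sqrt (m+1) - Real.sqrt m) := by
    have h := my_abel η (fun m => Real.sqrt m) d
    push_cast at h
    simp only [Real.sqrt_zero, mul_zero, sub_zero] at h
    exact h.symm
  have hterm : ∀ m ∈ range d, η m * (Real.sqrt ((m:ℝ)+1) - Real.sqrt m) ≤ (1:ℝ)/((m:ℝ)+1) := by
    intro m hm
    have hsq : Real.sqrt ((m:ℝ)+1) - Real.sqrt m ≤ 1 / Real.sqrt ((m:ℝ)+1) := by
      have hb : (0:ℝ) < Real.sqrt ((m:ℝ)+1) := Real.sqrt_pos.mpr (by positivity)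
      have ha : (0:ℝ) ≤ Real.sqrt (m:ℝ) := Real.sqrt_nonneg _
      have hab : Real.sqrt (m:ℝ) ≤ Real.sqrt ((m:ℝ)+1) := Real.sqrt_le_sqrt (by linarith)
      have ha2 : Real.sqrt (m:ℝ) * Real.sqrt (m:ℝ) = (m:ℝ) := Real.mul_self_sqrt (by positivity)
      have hb2 : Real.sqrt ((m:ℝ)+1) * Real.sqrt ((m:ℝ)+1) = (m:ℝ)+1 :=
        Real.mul_self_sqrt (by positivity)
      rw [le_div_iff₀ hb]
      nlinarith
    have henv := my_envelope η d hmono hnn hnorm (Finset.mem_range.mp hm)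
    have h1 : (0:ℝ) < Real.sqrt ((m:ℝ)+1) := Real.sqrt_pos.mpr (by positivity)
    have h2 : η m ≤ 1 / Real.sqrt ((m:ℝ)+1) := by
      rw [le_div_iff₀ h1]
      rw [mul_comm]
      exact henv
    have hba : 0 ≤ Real.sqrt ((m:ℝ)+1) - Real.sqrt (m:ℝ) :=
      sub_nonneg.mpr (Real.sqrt_le_sqrt (by linarith))
    calc η m * (Real.sqrt ((m:ℝ)+1) - Real.sqrt m)
        ≤ (1/Real.sqrt ((m:ℝ)+1)) * (1/Real.sqrt ((m:ℝ)+1)) := mul_le_mul h2 hsq hba (by positivity)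
      _ = 1 / ((m:ℝ)+1) := by
          rw [div_mul_div_comm, one_mul]
          congr 1
          exact Real.mul_self_sqrt (by positivity)
  calc ∑ i ∈ range d, η i * g i
      ≤ lam * ∑ m ∈ range d, η m * (Real.sqrt (m+1) - Real.sqrt m) := by rw [← hid2]; exact hbound
    _ ≤ lam * ∑ m ∈ range d, (1:ℝ)/(m+1) := by
        apply mul_le_mul_of_nonneg_left (Finset.sum_le_sum hterm) hlam

lemma my_harmonic (d : ℕ) : ∑ m ∈ range d, (1:ℝ)/(m+1) ≤ 1 + Real.log d := by
  have h := harmonic_le_one_add_log d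
  have e : (harmonic d : ℝ) = ∑ m ∈ range d, (1:ℝ)/(m+1) := by
    rw [harmonic]
    push_cast
    simp [one_div]
  linarith

lemma max_sq_le (x : ℝ) : (max x 0)^2 ≤ x^2 := by
  rcases le_total x 0 with h | h
  · rw [max_eq_right h]; simpa using sq_nonneg x
  · rw [max_eq_left h]

lemma max_neg_sq_le (x : ℝ) : (max (-x) 0)^2 ≤ x^2 := by
  have := max_sq_le (-x)
  simpa using this

lemma max_sub_max (x : ℝ) : max x 0 - max (-x) 0 = x := by
  rcases le_total x 0 with h | h
  · rw [max_eq_right h, max_eq_left (by linarith)]; ring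
  · rw [max_eq_left h, max_eq_right (by linarith)]; ring

lemma my_det (d : ℕ) (θ F : Fin d → ℝ) (lam : ℝ) (hlam : 0 ≤ lam)
    (hθn : ∑ i, θ i ^ 2 ≤ 1) (hθm : ∀ i j : Fin d, i ≤ j → θ i ≤ θ j)
    (hpre : ∀ m, 1 ≤ m → m ≤ d →
      |∑ i ∈ range m, (if h : i < d then F ⟨i, h⟩ else 0)| ≤ lam * Real.sqrt m)
    (hsuf : ∀ m, 1 ≤ m → m ≤ d →
      |∑ i ∈ range m, (if h : i < d then F ⟨d - 1 - i, by omega⟩ else 0)| ≤ lam * Real.sqrt m) :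
    ∑ i, θ i * F i ≤ 2 * (lam * (1 + Real.log d)) := by
  classical
  set θp : ℕ → ℝ := fun m => if h : m < d then max (θ ⟨d-1-m, by omega⟩) 0 else 0 with hθp
  set gp : ℕ → ℝ := fun i => if h : i < d then F ⟨d-1-i, by omega⟩ else 0 with hgp
  set θq : ℕ → ℝ := fun m => if h : m < d then max (-(θ ⟨m, h⟩)) 0 else 0 with hθq
  set gq : ℕ → ℝ := fun i => if h : i < d then -(F ⟨i, h⟩) else 0 with hgq
  -- monotonicity
  have monop : ∀ m, θp (m+1) ≤ θp m := by
    intro m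
    by_cases h1 : m + 1 < d
    · have h0 : m < d := by omega
      simp only [hθp, dif_pos h1, dif_pos h0]
      exact max_le_max (hθm _ _ (by simp [Fin.mk_le_mk]; omega)) le_rfl
    · by_cases h0 : m < d
      · simp only [hθp, dif_neg h1, dif_pos h0]
        exact le_max_right _ _
      · simp [hθp, dif_neg h1, dif_neg h0]
  have monoq : ∀ m, θq (m+1) ≤ θq m := by
    intro m
    by_cases h1 : m + 1 < d
    · have h0 : m < d := by omega
      simp only [hθq, dif_pos h1, dif_pos h0]
      exact max_le_max (neg_le_neg (hθm _ _ (by simp [Fin.mk_le_mk]))) le_rfl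
    · by_cases h0 : m < d
      · simp only [hθq, dif_neg h1, dif_pos h0]
        exact le_max_right _ _
      · simp [hθq, dif_neg h1, dif_neg h0]
  have nnp : ∀ m, 0 ≤ θp m := by
    intro m; simp only [hθp]; split
    · exact le_max_right _ _
    · exact le_refl 0
  have nnq : ∀ m, 0 ≤ θq m := by
    intro m; simp only [hθq]; split
    · exact le_max_right _ _
    · exact le_refl 0
  have normp : ∑ i ∈ range d, θp i ^ 2 ≤ 1 := by
    calc ∑ i ∈ range d, θp i ^ 2
        = ∑ i ∈ range d, (fun j => if h : j < d then (max (θ ⟨j, h⟩) 0)^2 else 0) (d - 1 - i) := by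
          apply Finset.sum_congr rfl
          intro i hi
          have hi' := Finset.mem_range.mp hi
          have h2 : d - 1 - i < d := by omega
          simp only [hθp, dif_pos hi', dif_pos h2]
      _ = ∑ j ∈ range d, (fun j => if h : j < d then (max (θ ⟨j, h⟩) 0)^2 else 0) j :=
          Finset.sum_range_reflect (fun j => if h : j < d then (max (θ ⟨j, h⟩) 0)^2 else 0) d
      _ ≤ ∑ j ∈ range d, (fun j => if h : j < d then (θ ⟨j, h⟩)^2 else 0) j := by
          apply Finset.sum_le_sum
          intro j _
          beta_reduce
          split
          · exact max_sq_le _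
          · exact le_refl 0
      _ = ∑ i : Fin d, θ i ^ 2 := by
          rw [← Fin.sum_univ_eq_sum_range]
          apply Finset.sum_congr rfl
          intro i _
          simp [i.isLt]
      _ ≤ 1 := hθn
  have normq : ∑ i ∈ range d, θq i ^ 2 ≤ 1 := by
    calc ∑ i ∈ range d, θq i ^ 2
        ≤ ∑ j ∈ range d, (fun j => if h : j < d then (θ ⟨j, h⟩)^2 else 0) j := by
          apply Finset.sum_le_sum
          intro j hj
          have hj' := Finset.mem_range.mp hj
          simp only [hθq, dif_pos hj']
          exact max_neg_sq_le _
      _ = ∑ i : Fin d, θ i ^ 2 := by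
          rw [← Fin.sum_univ_eq_sum_range]
          apply Finset.sum_congr rfl
          intro i _
          simp [i.isLt]
      _ ≤ 1 := hθn
  have splitId : ∑ i, θ i * F i
      = (∑ i ∈ range d, θp i * gp i) + ∑ i ∈ range d, θq i * gq i := by
    have r1 : ∑ i ∈ range d, θp i * gp i
        = ∑ j ∈ range d, (fun j => if h : j < d then (max (θ ⟨j, h⟩) 0) * F ⟨j, h⟩ else 0) j := by
      rw [← Finset.sum_range_reflect (fun j => if h : j < d then (max (θ ⟨j, h⟩) 0) * F ⟨j, h⟩ else 0) d]
      beta_reduce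
      apply Finset.sum_congr rfl
      intro i hi
      have hi' := Finset.mem_range.mp hi
      have h2 : d - 1 - i < d := by omega
      simp only [hθp, hgp, dif_pos hi', dif_pos h2]
    have r2 : ∑ i ∈ range d, θq i * gq i
        = ∑ j ∈ range d, (fun j => if h : j < d then (max (-(θ ⟨j, h⟩)) 0) * (-(F ⟨j, h⟩)) else 0) j := by
      apply Finset.sum_congr rfl
      intro i hi
      have hi' := Finset.mem_range.mp hi
      simp only [hθq, hgq, dif_pos hi']
    rw [r1, r2, ← Finset.sum_add_distrib, ← Fin.sum_univ_eq_sum_range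
      (fun j => (if h : j < d then (max (θ ⟨j, h⟩) 0) * F ⟨j, h⟩ else 0)
        + (if h : j < d then (max (-(θ ⟨j, h⟩)) 0) * (-(F ⟨j, h⟩)) else 0)) d]
    apply Finset.sum_congr rfl
    intro i _
    simp only [dif_pos i.isLt, Fin.eta]
    conv_lhs => rw [← max_sub_max (θ i)]
    ring
  have hcp := my_core d θp gp lam hlam monop nnp normp (fun m h1 h2 => hsuf m h1 h2)
  have hPq : ∀ m, 1 ≤ m → m ≤ d → |∑ i ∈ range m, gq i| ≤ lam * Real.sqrt m := by
    intro m h1 h2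
    have e : ∑ i ∈ range m, gq i = -∑ i ∈ range m, (if h : i < d then F ⟨i, h⟩ else 0) := by
      rw [← Finset.sum_neg_distrib]
      apply Finset.sum_congr rfl
      intro i _
      simp only [hgq]
      split <;> simp
    rw [e, abs_neg]
    exact hpre m h1 h2
  have hcq := my_core d θq gq lam hlam monoq nnq normq hPq
  have hH := my_harmonic d
  have h1 : lam * ∑ m ∈ range d, (1:ℝ)/(m+1) ≤ lam * (1 + Real.log d) :=
    mul_le_mul_of_nonneg_left hH hlam
  rw [splitId]
  linarith

lemma my_gauss_mgf {Ω : Type*} [MeasureSpace Ω] [IsProbabilityMeasure (ℙ : Measure Ω)]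
    {X : Ω → ℝ} (hX : Measurable X) (hg : Measure.map X ℙ = gaussianReal 0 1) (t : ℝ) :
    Integrable (fun ω => Real.exp (t * X ω)) ℙ ∧ mgf X ℙ t = Real.exp (t^2/2) := by
  have hpdf : ∀ x : ℝ, (Real.toNNReal (gaussianPDFReal 0 1 x) : ℝ) * Real.exp (t*x)
      = Real.exp (t^2/2) * gaussianPDFReal t 1 x := by
    intro x
    rw [Real.coe_toNNReal _ (gaussianPDFReal_nonneg 0 1 x)]
    simp only [gaussianPDFReal, NNReal.coe_one, mul_one, sub_zero]
    rw [show Real.exp (t^2/2) * ((Real.sqrt (2*Real.pi))⁻¹ * Real.exp (-(x-t)^2/2))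
      = (Real.sqrt (2*Real.pi))⁻¹ * (Real.exp (-(x-t)^2/2) * Real.exp (t^2/2)) from by ring]
    rw [mul_assoc]
    congr 1
    rw [← Real.exp_add, ← Real.exp_add]
    congr 1
    ring
  have hmeasd : Measurable (fun x => Real.toNNReal (gaussianPDFReal 0 1 x)) :=
    (measurable_gaussianPDFReal 0 1).real_toNNReal
  have hrep : gaussianReal 0 1
      = (volume : Measure ℝ).withDensity (fun x => (Real.toNNReal (gaussianPDFReal 0 1 x) : ℝ≥0∞)) := by
    rw [gaussianReal_of_var_ne_zero 0 one_ne_zero]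
    rfl
  have hfun : (fun x => (Real.toNNReal (gaussianPDFReal 0 1 x)) • Real.exp (t * x))
      = fun x => Real.exp (t^2/2) * gaussianPDFReal t 1 x := by
    funext x
    rw [NNReal.smul_def, smul_eq_mul]
    exact hpdf x
  have hint1 : Integrable (fun x => Real.exp (t * x)) (gaussianReal 0 1) := by
    rw [hrep, integrable_withDensity_iff_integrable_smul hmeasd]
    rw [hfun]
    exact (integrable_gaussianPDFReal t 1).const_mul _
  have hgmeas : AEStronglyMeasurable (fun x : ℝ => Real.exp (t * x)) (Measure.map X ℙ) :=
    (Real.measurable_exp.comp (measurable_id.const_mul t)).aestronglyMeasurable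
  have hintX : Integrable (fun ω => Real.exp (t * X ω)) ℙ := by
    rw [← hg] at hint1
    exact (integrable_map_measure hgmeas hX.aemeasurable).mp hint1
  refine ⟨hintX, ?_⟩
  have h1 : mgf X ℙ t = ∫ ω, Real.exp (t * X ω) ∂ℙ := rfl
  rw [h1, ← integral_map hX.aemeasurable hgmeas, hg, hrep,
    integral_withDensity_eq_integral_smul hmeasd, hfun, integral_const_mul,
    integral_gaussianPDFReal_eq_one t one_ne_zero, mul_one]

lemma my_tail {Ω : Type*} [MeasureSpace Ω] [IsProbabilityMeasure (ℙ : Measure Ω)]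
    {d : ℕ} {Z : Fin d → Ω → ℝ} (hmeas : ∀ i, Measurable (Z i))
    (hindep : iIndepFun Z ℙ)
    (hgauss : ∀ i, Measure.map (Z i) ℙ = gaussianReal 0 1)
    (s : Finset (Fin d)) (hs : 0 < s.card) {lam : ℝ} (hlam : 0 < lam) :
    ℙ {ω | lam * Real.sqrt s.card ≤ |(∑ i ∈ s, Z i) ω|}
      ≤ ENNReal.ofReal (2 * Real.exp (-lam^2/2)) := by
  set m := s.card with hmdef
  have hm : (0:ℝ) < m := by exact_mod_cast hs
  have hsm : (0:ℝ) < Real.sqrt m := Real.sqrt_pos.mpr hm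
  set t := lam / Real.sqrt m with ht
  have ht0 : 0 < t := div_pos hlam hsm
  have hint : ∀ u : ℝ, Integrable (fun ω => Real.exp (u * (∑ i ∈ s, Z i) ω)) ℙ := by
    intro u
    exact hindep.integrable_exp_mul_sum hmeas (fun i _ => (my_gauss_mgf (hmeas i) (hgauss i) u).1)
  have hmgf : ∀ u : ℝ, mgf (∑ i ∈ s, Z i) ℙ u = Real.exp ((m:ℝ) * u ^ 2 / 2) := by
    intro u
    rw [hindep.mgf_sum hmeas s]
    have h1 : ∀ i ∈ s, mgf (Z i) ℙ u = Real.exp (u^2/2) :=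
      fun i _ => (my_gauss_mgf (hmeas i) (hgauss i) u).2
    rw [Finset.prod_congr rfl h1, Finset.prod_const, ← Real.exp_nat_mul]
    congr 1
    ring
  have e1 : t * (lam * Real.sqrt m) = lam ^ 2 := by
    rw [ht]
    field_simp
  have e2 : (m:ℝ) * t ^ 2 = lam ^ 2 := by
    rw [ht, div_pow, Real.sq_sqrt hm.le]
    field_simp
  have hup : ℙ {ω | lam * Real.sqrt m ≤ (∑ i ∈ s, Z i) ω}
      ≤ ENNReal.ofReal (Real.exp (-lam^2/2)) := by
    have h := measure_ge_le_exp_mul_mgf (μ := ℙ) (X := ∑ i ∈ s, Z i) (lam * Real.sqrt m)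
      ht0.le (hint t)
    rw [hmgf t, ← Real.exp_add] at h
    have hkey : -t * (lam * Real.sqrt m) + (m:ℝ) * t ^ 2 / 2 = -lam^2/2 := by
      linear_combination (-1 : ℝ) * e1 + e2 / 2
    rw [hkey] at h
    rw [ENNReal.le_ofReal_iff_toReal_le (measure_ne_top _ _) (Real.exp_nonneg _)]
    exact h
  have hlo : ℙ {ω | (∑ i ∈ s, Z i) ω ≤ -(lam * Real.sqrt m)}
      ≤ ENNReal.ofReal (Real.exp (-lam^2/2)) := by
    have h := measure_le_le_exp_mul_mgf (μ := ℙ) (X := ∑ i ∈ s, Z i) (-(lam * Real.sqrt m))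
      (neg_nonpos.mpr ht0.le) (hint (-t))
    rw [hmgf (-t), ← Real.exp_add] at h
    have hkey : -(-t) * -(lam * Real.sqrt m) + (m:ℝ) * (-t) ^ 2 / 2 = -lam^2/2 := by
      linear_combination (-1 : ℝ) * e1 + e2 / 2
    rw [hkey] at h
    rw [ENNReal.le_ofReal_iff_toReal_le (measure_ne_top _ _) (Real.exp_nonneg _)]
    exact h
  have hsub : {ω | lam * Real.sqrt m ≤ |(∑ i ∈ s, Z i) ω|}
      ⊆ {ω | lam * Real.sqrt m ≤ (∑ i ∈ s, Z i) ω}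
        ∪ {ω | (∑ i ∈ s, Z i) ω ≤ -(lam * Real.sqrt m)} := by
    intro ω hω
    simp only [Set.mem_setOf_eq, Set.mem_union] at *
    rcases le_abs.mp hω with h | h
    · exact Or.inl h
    · exact Or.inr (by linarith)
  calc ℙ {ω | lam * Real.sqrt m ≤ |(∑ i ∈ s, Z i) ω|}
      ≤ ℙ ({ω | lam * Real.sqrt m ≤ (∑ i ∈ s, Z i) ω}
        ∪ {ω | (∑ i ∈ s, Z i) ω ≤ -(lam * Real.sqrt m)}) := measure_mono hsub
    _ ≤ ℙ {ω | lam * Real.sqrt m ≤ (∑ i ∈ s, Z i) ω}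
        + ℙ {ω | (∑ i ∈ s, Z i) ω ≤ -(lam * Real.sqrt m)} := measure_union_le _ _
    _ ≤ ENNReal.ofReal (Real.exp (-lam^2/2)) + ENNReal.ofReal (Real.exp (-lam^2/2)) :=
        add_le_add hup hlo
    _ = ENNReal.ofReal (2 * Real.exp (-lam^2/2)) := by
        rw [← ENNReal.ofReal_add (Real.exp_nonneg _) (Real.exp_nonneg _)]
        congr 1
        ring

lemma my_pre_eq (d m : ℕ) (hm : m ≤ d) (F : Fin d → ℝ) :
    ∑ i ∈ range m, (if h : i < d then F ⟨i, h⟩ else 0)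
      = ∑ i ∈ Finset.univ.filter (fun i : Fin d => (i:ℕ) < m), F i := by
  refine Finset.sum_bij' (fun a ha => (⟨a, lt_of_lt_of_le (Finset.mem_range.mp ha) hm⟩ : Fin d))
    (fun b _ => (b : ℕ)) ?_ ?_ ?_ ?_ ?_
  · intro a ha
    simp [Finset.mem_filter, Finset.mem_range.mp ha]
  · intro b hb
    simp only [Finset.mem_filter] at hb
    exact Finset.mem_range.mpr hb.2
  · intro a ha; rfl
  · intro b hb; rfl
  · intro a ha
    rw [dif_pos (lt_of_lt_of_le (Finset.mem_range.mp ha) hm)]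

lemma my_pre_card (d m : ℕ) (hm : m ≤ d) :
    (Finset.univ.filter (fun i : Fin d => (i:ℕ) < m)).card = m := by
  have h : (Finset.univ.filter (fun i : Fin d => (i:ℕ) < m)).card = (range m).card := by
    refine Finset.card_bij' (fun b _ => (b : ℕ))
      (fun a ha => (⟨a, lt_of_lt_of_le (Finset.mem_range.mp ha) hm⟩ : Fin d)) ?_ ?_ ?_ ?_
    · intro b hb
      simp only [Finset.mem_filter] at hb
      exact Finset.mem_range.mpr hb.2
    · intro a ha
      simp [Finset.mem_filter, Finset.mem_range.mp ha]
    · intro b hb; rfl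
    · intro a ha; rfl
  rw [h, Finset.card_range]

lemma my_suf_eq (d m : ℕ) (hm : m ≤ d) (F : Fin d → ℝ) :
    ∑ i ∈ range m, (if h : i < d then F ⟨d - 1 - i, by omega⟩ else 0)
      = ∑ i ∈ Finset.univ.filter (fun i : Fin d => d - m ≤ (i:ℕ)), F i := by
  refine Finset.sum_bij' (fun a ha => (⟨d - 1 - a, by
      have := Finset.mem_range.mp ha; omega⟩ : Fin d))
    (fun b _ => d - 1 - (b : ℕ)) ?_ ?_ ?_ ?_ ?_
  · intro a ha
    have := Finset.mem_range.mp ha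
    simp only [Finset.mem_filter, Finset.mem_univ, true_and]
    show d - m ≤ d - 1 - a
    omega
  · intro b hb
    simp only [Finset.mem_filter, Finset.mem_univ, true_and] at hb
    have := b.isLt
    refine Finset.mem_range.mpr ?_
    show d - 1 - (b : ℕ) < m
    omega
  · intro a ha
    have := Finset.mem_range.mp ha
    show d - 1 - (d - 1 - a) = a
    omega
  · intro b hb
    simp only [Finset.mem_filter, Finset.mem_univ, true_and] at hb
    have := b.isLt
    apply Fin.ext
    show d - 1 - (d - 1 - (b:ℕ)) = (b:ℕ)
    omega
  · intro a ha
    have ha' := Finset.mem_range.mp ha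
    rw [dif_pos (show a < d by omega)]

lemma my_suf_card (d m : ℕ) (hm : m ≤ d) :
    (Finset.univ.filter (fun i : Fin d => d - m ≤ (i:ℕ))).card = m := by
  have h : (Finset.univ.filter (fun i : Fin d => d - m ≤ (i:ℕ))).card = (range m).card := by
    refine Finset.card_bij' (fun b _ => d - 1 - (b : ℕ))
      (fun a ha => (⟨d - 1 - a, by have := Finset.mem_range.mp ha; omega⟩ : Fin d)) ?_ ?_ ?_ ?_
    · intro b hb
      simp only [Finset.mem_filter, Finset.mem_univ, true_and] at hb
      have := b.isLt
      refine Finset.mem_range.mpr ?_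
      show d - 1 - (b : ℕ) < m
      omega
    · intro a ha
      have := Finset.mem_range.mp ha
      simp only [Finset.mem_filter, Finset.mem_univ, true_and]
      show d - m ≤ d - 1 - a
      omega
    · intro b hb
      simp only [Finset.mem_filter, Finset.mem_univ, true_and] at hb
      have := b.isLt
      apply Fin.ext
      show d - 1 - (d - 1 - (b:ℕ)) = (b:ℕ)
      omega
    · intro a ha
      have := Finset.mem_range.mp ha
      show d - 1 - (d - 1 - a) = a
      omega
  rw [h, Finset.card_range]

lemma my_sqrt_le (y : ℝ) (hy : 0 ≤ y) : Real.sqrt y ≤ 1 + y := by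
  rcases le_total y 1 with h | h
  · calc Real.sqrt y ≤ Real.sqrt 1 := Real.sqrt_le_sqrt h
      _ = 1 := Real.sqrt_one
      _ ≤ 1 + y := by linarith
  · calc Real.sqrt y ≤ Real.sqrt (y^2) := Real.sqrt_le_sqrt (by nlinarith)
      _ = y := Real.sqrt_sq hy
      _ ≤ 1 + y := by linarith

lemma my_side : ∀ᶠ d : ℕ in atTop,
    2 * ((2 * Real.sqrt (Real.log ((d:ℝ)+1))) * (1 + Real.log d)) ≤ (d:ℝ) ^ ((1:ℝ)/4) := by
  have hlog : ∀ᶠ x : ℝ in atTop, Real.log x ≤ x ^ ((1:ℝ)/16) := by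
    have h := isLittleO_log_rpow_atTop (show (0:ℝ) < 1/16 by norm_num)
    have h2 := h.def one_pos
    filter_upwards [h2, eventually_ge_atTop (1:ℝ)] with x hx hx1
    rw [Real.norm_eq_abs, Real.norm_eq_abs, abs_of_nonneg (Real.log_nonneg hx1),
      abs_of_nonneg (Real.rpow_nonneg (by linarith) _), one_mul] at hx
    exact hx
  have hN : Tendsto (fun d : ℕ => ((d:ℝ)+1)) atTop atTop :=
    tendsto_atTop_add_const_right _ 1 tendsto_natCast_atTop_atTop
  filter_upwards [hN.eventually hlog, eventually_ge_atTop (2^40 : ℕ)] with d hd1 hd2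
  have hd1' : (2^40:ℝ) ≤ (d:ℝ) := by exact_mod_cast hd2
  have hdpos : (1:ℝ) ≤ (d:ℝ) := by norm_num at hd1' ⊢; linarith
  set L := Real.log ((d:ℝ)+1) with hLdef
  set A := ((d:ℝ)+1) ^ ((1:ℝ)/16) with hAdef
  set B := (d:ℝ) ^ ((1:ℝ)/8) with hBdef
  have hL0 : 0 ≤ L := Real.log_nonneg (by linarith)
  have hA1 : (1:ℝ) ≤ A := by
    calc (1:ℝ) = (1:ℝ) ^ ((1:ℝ)/16) := (Real.one_rpow _).symm
      _ ≤ A := Real.rpow_le_rpow (by norm_num) (by linarith) (by norm_num)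
  have hLA : L ≤ A := hd1
  have hsq : Real.sqrt L ≤ 1 + L := my_sqrt_le L hL0
  have hlogd0 : 0 ≤ Real.log d := Real.log_nonneg hdpos
  have hlogd : Real.log d ≤ L := by
    rw [hLdef]
    exact (Real.log_le_log_iff (by linarith) (by linarith)).mpr (by linarith)
  have hB0 : (0:ℝ) ≤ B := Real.rpow_nonneg (by linarith) _
  have hmain : 2 * ((2 * Real.sqrt L) * (1 + Real.log d)) ≤ 4 * (1+L)^2 := by
    nlinarith [Real.sqrt_nonneg L, hsq, hlogd, hlogd0, hL0]
  have h2 : 4 * (1+L)^2 ≤ 4 * (2*A)^2 := by nlinarith [hLA, hA1, hL0]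
  have h3 : 4 * (2*A)^2 = 16 * (((d:ℝ)+1) ^ ((1:ℝ)/8)) := by
    have hAA : A^2 = ((d:ℝ)+1) ^ ((1:ℝ)/8) := by
      rw [hAdef, ← Real.rpow_natCast (((d:ℝ)+1) ^ ((1:ℝ)/16)) 2, ← Real.rpow_mul (by linarith)]
      norm_num
    rw [show 4 * (2*A)^2 = 16 * A^2 from by ring, hAA]
  have h4 : (((d:ℝ)+1)) ^ ((1:ℝ)/8) ≤ (2*(d:ℝ)) ^ ((1:ℝ)/8) :=
    Real.rpow_le_rpow (by linarith) (by linarith) (by norm_num)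
  have h5 : (2*(d:ℝ)) ^ ((1:ℝ)/8) = 2 ^ ((1:ℝ)/8) * B :=
    Real.mul_rpow (by norm_num) (by linarith)
  have h6 : (2:ℝ) ^ ((1:ℝ)/8) ≤ 2 := by
    calc (2:ℝ)^((1:ℝ)/8) ≤ (2:ℝ)^(1:ℝ) := Real.rpow_le_rpow_of_exponent_le (by norm_num) (by norm_num)
      _ = 2 := Real.rpow_one 2
  have h7 : (32:ℝ) ≤ B := by
    have hle : ((2:ℝ)^(40:ℕ)) ^ ((1:ℝ)/8) ≤ (d:ℝ)^((1:ℝ)/8) :=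
      Real.rpow_le_rpow (by positivity) hd1' (by norm_num)
    have heq : ((2:ℝ)^(40:ℕ)) ^ ((1:ℝ)/8) = 32 := by
      rw [← Real.rpow_natCast 2 40, ← Real.rpow_mul (by norm_num)]
      rw [show ((40:ℕ):ℝ) * ((1:ℝ)/8) = ((5:ℕ):ℝ) from by norm_num, Real.rpow_natCast]
      norm_num
    rw [hBdef, ← heq]
    exact hle
  have h8 : (d:ℝ)^((1:ℝ)/4) = B * B := by
    rw [hBdef, ← Real.rpow_add (by linarith : (0:ℝ) < (d:ℝ))]
    norm_num
  calc 2 * ((2 * Real.sqrt L) * (1 + Real.log d)) ≤ 4 * (1+L)^2 := hmain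
    _ ≤ 4 * (2*A)^2 := h2
    _ = 16 * (((d:ℝ)+1) ^ ((1:ℝ)/8)) := h3
    _ ≤ 16 * ((2*(d:ℝ)) ^ ((1:ℝ)/8)) := by linarith
    _ = 16 * (2 ^ ((1:ℝ)/8) * B) := by rw [h5]
    _ ≤ 16 * (2 * B) := by nlinarith [h6, hB0]
    _ = 32 * B := by ring
    _ ≤ B * B := by nlinarith [h7, hB0]
    _ = (d:ℝ)^((1:ℝ)/4) := h8.symm


/-- Let `Z ~ N(0, I_d)` be a standard Gaussian vector in `ℝ^d`
(i.i.d. standard normal coordinates).  Then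
`P( sup_{‖θ‖=1, θ₁ ≤ … ≤ θ_d} θᵀZ ≤ d^{1/4} ) → 1` as `d → ∞`. -/
theorem monotone_cone_gaussian_sup_bound
    {Ω : Type*} [MeasureSpace Ω] [IsProbabilityMeasure (ℙ : Measure Ω)]
    (Z : (d : ℕ) → Fin d → Ω → ℝ)
    (hmeas : ∀ d i, Measurable (Z d i))
    (hindep : ∀ d, iIndepFun (Z d) ℙ)
    (hgauss : ∀ d i, Measure.map (Z d i) ℙ = gaussianReal 0 1) :
    Tendsto
      (fun d : ℕ => ℙ {ω |
        sSup {v : ℝ | ∃ θ : Fin d → ℝ,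
            (∑ i, θ i ^ 2 = 1)
            ∧ (∀ i j : Fin d, i ≤ j → θ i ≤ θ j)
            ∧ v = ∑ i, θ i * Z d i ω}
          ≤ (d : ℝ) ^ ((1 : ℝ) / 4)})
      atTop (nhds 1) := by
  classical
  set lam : ℕ → ℝ := fun d => 2 * Real.sqrt (Real.log ((d:ℝ)+1)) with hlamdef
  have hlam0 : ∀ d : ℕ, 0 ≤ lam d := by
    intro d
    simp only [hlamdef]
    positivity
  set G : (d : ℕ) → Set Ω := fun d => {ω | ∀ m, 1 ≤ m → m ≤ d →
      |∑ i ∈ Finset.range m, (if h : i < d then Z d ⟨i, h⟩ ω else 0)|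
        ≤ lam d * Real.sqrt m ∧
      |∑ i ∈ Finset.range m, (if h : i < d then Z d ⟨d - 1 - i, by omega⟩ ω else 0)|
        ≤ lam d * Real.sqrt m} with hGdef
  have hpre_meas : ∀ d m : ℕ, Measurable (fun ω =>
      ∑ i ∈ Finset.range m, (if h : i < d then Z d ⟨i, h⟩ ω else 0)) := by
    intro d m
    apply Finset.measurable_sum
    intro i _
    by_cases h : i < d
    · simp only [dif_pos h]; exact hmeas d _
    · simp only [dif_neg h]; exact measurable_const
  have hsuf_meas : ∀ d m : ℕ, Measurable (fun ω =>
      ∑ i ∈ Finset.range m, (if h : i < d then Z d ⟨d - 1 - i, by omega⟩ ω else 0)) := by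
    intro d m
    apply Finset.measurable_sum
    intro i _
    by_cases h : i < d
    · simp only [dif_pos h]; exact hmeas d _
    · simp only [dif_neg h]; exact measurable_const
  have hGmeas : ∀ d, MeasurableSet (G d) := by
    intro d
    have hrw : G d = ⋂ (m : ℕ) (_ : 1 ≤ m) (_ : m ≤ d),
        ({ω | |∑ i ∈ Finset.range m, (if h : i < d then Z d ⟨i, h⟩ ω else 0)|
            ≤ lam d * Real.sqrt m}
          ∩ {ω | |∑ i ∈ Finset.range m, (if h : i < d then Z d ⟨d - 1 - i, by omega⟩ ω else 0)|
            ≤ lam d * Real.sqrt m}) := by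
      ext ω
      simp only [hGdef, Set.mem_setOf_eq, Set.mem_iInter, Set.mem_inter_iff]
    rw [hrw]
    exact MeasurableSet.iInter fun m => MeasurableSet.iInter fun _ => MeasurableSet.iInter fun _ =>
      (measurableSet_le ((hpre_meas d m).abs) measurable_const).inter
        (measurableSet_le ((hsuf_meas d m).abs) measurable_const)
  have hGc : ∀ d : ℕ, 1 ≤ d →
      ℙ ((G d)ᶜ) ≤ ENNReal.ofReal (4 * d * Real.exp (-(lam d)^2/2)) := by
    intro d hd
    have hlampos : 0 < lam d := by
      have hlog : 0 < Real.log ((d:ℝ)+1) := Real.log_pos (by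
        have : (1:ℝ) ≤ (d:ℝ) := by exact_mod_cast hd
        linarith)
      simp only [hlamdef]
      positivity
    have htailpre : ∀ m, 1 ≤ m → m ≤ d →
        ℙ {ω | lam d * Real.sqrt m
            < |∑ i ∈ Finset.range m, (if h : i < d then Z d ⟨i, h⟩ ω else 0)|}
          ≤ ENNReal.ofReal (2 * Real.exp (-(lam d)^2/2)) := by
      intro m h1 h2
      have hset : {ω | lam d * Real.sqrt m
            < |∑ i ∈ Finset.range m, (if h : i < d then Z d ⟨i, h⟩ ω else 0)|}
          ⊆ {ω | lam d * Real.sqrt ((Finset.univ.filter (fun i : Fin d => (i:ℕ) < m)).card)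
            ≤ |(∑ i ∈ Finset.univ.filter (fun i : Fin d => (i:ℕ) < m), Z d i) ω|} := by
        intro ω hω
        simp only [Set.mem_setOf_eq] at hω ⊢
        rw [my_pre_card d m h2, Finset.sum_apply, ← my_pre_eq d m h2 (fun i => Z d i ω)]
        exact le_of_lt hω
      refine (measure_mono hset).trans ?_
      exact my_tail (hmeas d) (hindep d) (hgauss d) _ (by rw [my_pre_card d m h2]; omega) hlampos
    have htailsuf : ∀ m, 1 ≤ m → m ≤ d →
        ℙ {ω | lam d * Real.sqrt m
            < |∑ i ∈ Finset.range m, (if h : i < d then Z d ⟨d - 1 - i, by omega⟩ ω else 0)|}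
          ≤ ENNReal.ofReal (2 * Real.exp (-(lam d)^2/2)) := by
      intro m h1 h2
      have hset : {ω | lam d * Real.sqrt m
            < |∑ i ∈ Finset.range m, (if h : i < d then Z d ⟨d - 1 - i, by omega⟩ ω else 0)|}
          ⊆ {ω | lam d * Real.sqrt ((Finset.univ.filter (fun i : Fin d => d - m ≤ (i:ℕ))).card)
            ≤ |(∑ i ∈ Finset.univ.filter (fun i : Fin d => d - m ≤ (i:ℕ)), Z d i) ω|} := by
        intro ω hω
        simp only [Set.mem_setOf_eq] at hω ⊢
        rw [my_suf_card d m h2, Finset.sum_apply, ← my_suf_eq d m h2 (fun i => Z d i ω)]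
        exact le_of_lt hω
      refine (measure_mono hset).trans ?_
      exact my_tail (hmeas d) (hindep d) (hgauss d) _ (by rw [my_suf_card d m h2]; omega) hlampos
    have hcover : (G d)ᶜ ⊆ ⋃ m ∈ (Finset.Icc 1 d : Finset ℕ),
        ({ω | lam d * Real.sqrt m
            < |∑ i ∈ Finset.range m, (if h : i < d then Z d ⟨i, h⟩ ω else 0)|}
          ∪ {ω | lam d * Real.sqrt m
            < |∑ i ∈ Finset.range m, (if h : i < d then Z d ⟨d - 1 - i, by omega⟩ ω else 0)|}) := by
      intro ω hω
      simp only [hGdef, Set.mem_compl_iff, Set.mem_setOf_eq] at hω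
      push_neg at hω
      obtain ⟨m, h1, h2, h3⟩ := hω
      refine Set.mem_biUnion (Finset.mem_coe.mpr (Finset.mem_Icc.mpr ⟨h1, h2⟩)) ?_
      by_cases hA : |∑ i ∈ Finset.range m, (if h : i < d then Z d ⟨i, h⟩ ω else 0)|
          ≤ lam d * Real.sqrt m
      · exact Or.inr (h3 hA)
      · exact Or.inl (lt_of_not_ge hA)
    calc ℙ ((G d)ᶜ) ≤ ℙ (⋃ m ∈ (Finset.Icc 1 d : Finset ℕ),
        ({ω | lam d * Real.sqrt m
            < |∑ i ∈ Finset.range m, (if h : i < d then Z d ⟨i, h⟩ ω else 0)|}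
          ∪ {ω | lam d * Real.sqrt m
            < |∑ i ∈ Finset.range m, (if h : i < d then Z d ⟨d - 1 - i, by omega⟩ ω else 0)|})) :=
          measure_mono hcover
      _ ≤ ∑ m ∈ Finset.Icc 1 d, ℙ
          ({ω | lam d * Real.sqrt m
            < |∑ i ∈ Finset.range m, (if h : i < d then Z d ⟨i, h⟩ ω else 0)|}
          ∪ {ω | lam d * Real.sqrt m
            < |∑ i ∈ Finset.range m, (if h : i < d then Z d ⟨d - 1 - i, by omega⟩ ω else 0)|}) :=
          measure_biUnion_finset_le _ _
      _ ≤ ∑ m ∈ Finset.Icc 1 d,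
          (ENNReal.ofReal (2 * Real.exp (-(lam d)^2/2))
            + ENNReal.ofReal (2 * Real.exp (-(lam d)^2/2))) := by
          apply Finset.sum_le_sum
          intro m hm
          obtain ⟨h1, h2⟩ := Finset.mem_Icc.mp hm
          exact (measure_union_le _ _).trans (add_le_add (htailpre m h1 h2) (htailsuf m h1 h2))
      _ = (d : ℝ≥0∞) * ENNReal.ofReal (4 * Real.exp (-(lam d)^2/2)) := by
          rw [Finset.sum_const, Nat.card_Icc]
          simp only [Nat.add_sub_cancel, nsmul_eq_mul]
          congr 1
          rw [← ENNReal.ofReal_add (by positivity) (by positivity)]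
          congr 1
          ring
      _ = ENNReal.ofReal (4 * d * Real.exp (-(lam d)^2/2)) := by
          rw [← ENNReal.ofReal_natCast d, ← ENNReal.ofReal_mul (by positivity)]
          congr 1
          ring
  have hexp : ∀ d : ℕ, Real.exp (-(lam d)^2/2) = (1/((d:ℝ)+1))^2 := by
    intro d
    have h01 : (0:ℝ) ≤ (d:ℝ) := Nat.cast_nonneg d
    have hL : 0 ≤ Real.log ((d:ℝ)+1) := Real.log_nonneg (by linarith)
    have hsq : (lam d)^2 = 4 * Real.log ((d:ℝ)+1) := by
      simp only [hlamdef]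
      rw [mul_pow, Real.sq_sqrt hL]
      ring
    rw [hsq, show -(4 * Real.log ((d:ℝ)+1))/2
      = -(Real.log ((d:ℝ)+1) + Real.log ((d:ℝ)+1)) from by ring,
      Real.exp_neg, Real.exp_add, Real.exp_log (by linarith)]
    rw [div_pow, one_pow, ← one_div]
    congr 1
    ring
  have h0 : Tendsto (fun d : ℕ => ℙ ((G d)ᶜ)) atTop (nhds 0) := by
    have hreal : Tendsto (fun d : ℕ => 4 * (d:ℝ) * Real.exp (-(lam d)^2/2)) atTop (nhds 0) := by
      simp only [hexp]
      have hb : ∀ d : ℕ, 4 * (d:ℝ) * (1/((d:ℝ)+1))^2 ≤ 4 * (1/((d:ℝ)+1)) := by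
        intro d
        have h1 : (0:ℝ) < (d:ℝ)+1 := by positivity
        have h2 : 4 * (d:ℝ) * (1/((d:ℝ)+1))^2 = 4*(d:ℝ)/((d:ℝ)+1)^2 := by
          field_simp
        have h3 : 4 * (1/((d:ℝ)+1)) = 4/((d:ℝ)+1) := by ring
        rw [h2, h3, div_le_div_iff₀ (by positivity) h1]
        nlinarith [(Nat.cast_nonneg d : (0:ℝ) ≤ (d:ℝ))]
      have hnn : ∀ d : ℕ, 0 ≤ 4 * (d:ℝ) * (1/((d:ℝ)+1))^2 := fun d => by positivity
      apply squeeze_zero hnn hb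
      have h4 := tendsto_one_div_add_atTop_nhds_zero_nat.const_mul (4:ℝ)
      simpa using h4
    have hup := ENNReal.tendsto_ofReal hreal
    rw [ENNReal.ofReal_zero] at hup
    apply tendsto_of_tendsto_of_tendsto_of_le_of_le' tendsto_const_nhds hup
    · exact Eventually.of_forall fun d => zero_le
    · filter_upwards [eventually_ge_atTop 1] with d hd
      exact hGc d hd
  have hGlim : Tendsto (fun d => ℙ (G d)) atTop (nhds 1) := by
    have hrw : ∀ d, ℙ (G d) = 1 - ℙ ((G d)ᶜ) := by
      intro d
      conv_lhs => rw [← compl_compl (G d)]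
      rw [prob_compl_eq_one_sub (hGmeas d).compl]
    simp only [hrw]
    have := ENNReal.Tendsto.sub
      (tendsto_const_nhds : Tendsto (fun _ : ℕ => (1:ℝ≥0∞)) atTop (nhds 1)) h0
      (Or.inl (by norm_num))
    simpa using this
  have hsub : ∀ᶠ d : ℕ in atTop, G d ⊆ {ω |
      sSup {v : ℝ | ∃ θ : Fin d → ℝ,
          (∑ i, θ i ^ 2 = 1)
          ∧ (∀ i j : Fin d, i ≤ j → θ i ≤ θ j)
          ∧ v = ∑ i, θ i * Z d i ω}
        ≤ (d : ℝ) ^ ((1 : ℝ) / 4)} := by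
    filter_upwards [my_side, eventually_ge_atTop 1] with d hside hd
    intro ω hω
    simp only [hGdef, Set.mem_setOf_eq] at hω ⊢
    apply Real.sSup_le
    · rintro v ⟨θ, hn, hmono, rfl⟩
      have hdet := my_det d θ (fun i => Z d i ω) (lam d) (hlam0 d) (le_of_eq hn) hmono
        (fun m h1 h2 => (hω m h1 h2).1) (fun m h1 h2 => (hω m h1 h2).2)
      refine hdet.trans ?_
      calc 2 * (lam d * (1 + Real.log d))
          = 2 * ((2 * Real.sqrt (Real.log ((d:ℝ)+1))) * (1 + Real.log d)) := by
            simp only [hlamdef]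
        _ ≤ (d:ℝ) ^ ((1:ℝ)/4) := hside
    · exact Real.rpow_nonneg (Nat.cast_nonneg d) _
  refine tendsto_of_tendsto_of_tendsto_of_le_of_le' hGlim tendsto_const_nhds ?_ ?_
  · filter_upwards [hsub] with d h using measure_mono h
  · exact Eventually.of_forall fun d => prob_le_one
end

section
/- Consider a training/validation split of dn totally ordered elements, where within each of d rows, consecutive pairs (in the total order restricted to the row) contribute one element to the training set and one to the validation set. If elements of ranks k₁ < k₂ are adjacent within the training set (all elements of ranks strictly between them lie in the validation set), then k₂ − k₁ ≤ 2d + 1. -/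
/-- `dn` elements `(i,t)` (row `i`, within-row position `t` in the
total order, realized by a rank bijection `R` that is strictly increasing in `t` for
each row) are split into a training set (`val = false`) and a validation set
(`val = true`), one element of each within-row consecutive pair `(2s, 2s+1)` going to
each set.  If the elements of ranks `k₁ < k₂` are both in the training set and every
element of rank strictly between them is in the validation set, then
`k₂ − k₁ ≤ 2d + 1`. -/
theorem train_adjacent_rank_gap_bound
    (d n : ℕ)
    (R : (Fin d × Fin n) ≃ Fin (d * n))
    (hmono : ∀ i : Fin d, StrictMono (fun t : Fin n => R (i, t)))
    (val : Fin d × Fin n → Bool)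
    (hpair : ∀ (i : Fin d) (s : ℕ) (h1 : 2 * s < n) (h2 : 2 * s + 1 < n),
      val (i, ⟨2 * s, h1⟩) ≠ val (i, ⟨2 * s + 1, h2⟩))
    (k₁ k₂ : Fin (d * n)) (hk : k₁ < k₂)
    (h₁ : val (R.symm k₁) = false)
    (h₂ : val (R.symm k₂) = false)
    (hbetween : ∀ k : Fin (d * n), k₁ < k → k < k₂ → val (R.symm k) = true) :
    (k₂ : ℕ) - (k₁ : ℕ) ≤ 2 * d + 1 := by
  by_contra hcon
  push_neg at hcon
  -- window of all ranks strictly between k₁ and k₂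
  set W : Finset (Fin (d * n)) := Finset.Ioo k₁ k₂ with hW
  have hWcard : 2 * d < W.card := by
    rw [hW, Fin.card_Ioo]
    omega
  have hmaps : ∀ k ∈ W, (R.symm k).1 ∈ (Finset.univ : Finset (Fin d)) :=
    fun _ _ => Finset.mem_univ _
  have hcard2 : (Finset.univ : Finset (Fin d)).card * 2 < W.card := by
    simp only [Finset.card_univ, Fintype.card_fin]
    omega
  obtain ⟨i, -, hi⟩ := Finset.exists_lt_card_fiber_of_mul_lt_card_of_maps_to hmaps hcard2
  set F := W.filter (fun k => (R.symm k).1 = i) with hF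
  -- image of positions
  set T : Finset ℕ := F.image (fun k => ((R.symm k).2 : ℕ)) with hT
  have hTcard : 2 < T.card := by
    rw [hT, Finset.card_image_of_injOn]
    · exact hi
    · intro x hx y hy hxy
      simp only [Finset.mem_coe, hF, Finset.mem_filter] at hx hy
      have : R.symm x = R.symm y := by
        apply Prod.ext
        · rw [hx.2, hy.2]
        · exact Fin.ext hxy
      exact R.symm.injective this
  have hTne : T.Nonempty := Finset.card_pos.mp (by omega)
  set a := T.min' hTne with ha
  set c := T.max' hTne with hc
  have hac : a + 2 ≤ c := by
    have hsub : T ⊆ Finset.Icc a c := fun x hx =>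
      Finset.mem_Icc.mpr ⟨T.min'_le x hx, T.le_max' x hx⟩
    have := Finset.card_le_card hsub
    rw [Nat.card_Icc] at this
    omega
  -- membership facts
  have hmem : ∀ p ∈ T, ∃ k : Fin (d * n), k₁ < k ∧ k < k₂ ∧
      ∃ hp : p < n, R.symm k = (i, ⟨p, hp⟩) := by
    intro p hp
    rw [hT] at hp
    obtain ⟨k, hkF, hkp⟩ := Finset.mem_image.mp hp
    rw [hF, Finset.mem_filter, hW, Finset.mem_Ioo] at hkF
    refine ⟨k, hkF.1.1, hkF.1.2, ?_, ?_⟩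
    · exact hkp ▸ (R.symm k).2.isLt
    · apply Prod.ext
      · exact hkF.2
      · exact Fin.ext (by simpa using hkp)
  obtain ⟨ka, hka1, hka2, hpa, hkaeq⟩ := hmem a (T.min'_mem hTne)
  obtain ⟨kc, hkc1, hkc2, hpc, hkceq⟩ := hmem c (T.max'_mem hTne)
  -- every position between a and c is "true"
  have hval : ∀ p (hpn : p < n), a ≤ p → p ≤ c → val (i, ⟨p, hpn⟩) = true := by
    intro p hpn hap hpc'
    have h1 : ka ≤ R (i, ⟨p, hpn⟩) := by
      have : R (i, ⟨a, hpa⟩) ≤ R (i, ⟨p, hpn⟩) :=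
        (hmono i).monotone (by exact_mod_cast hap)
      rwa [show R (i, ⟨a, hpa⟩) = ka from by rw [← hkaeq, Equiv.apply_symm_apply]] at this
    have h2 : R (i, ⟨p, hpn⟩) ≤ kc := by
      have : R (i, ⟨p, hpn⟩) ≤ R (i, ⟨c, hpc⟩) :=
        (hmono i).monotone (by exact_mod_cast hpc')
      rwa [show R (i, ⟨c, hpc⟩) = kc from by rw [← hkceq, Equiv.apply_symm_apply]] at this
    have := hbetween (R (i, ⟨p, hpn⟩)) (lt_of_lt_of_le hka1 h1) (lt_of_le_of_lt h2 hkc2)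
    rwa [Equiv.symm_apply_apply] at this
  -- pick the even start
  obtain ⟨s, hs⟩ : ∃ s, 2 * s = a ∨ 2 * s = a + 1 := ⟨(a + 1) / 2, by omega⟩
  have hcn : c < n := hpc
  rcases hs with hs | hs
  · exact hpair i s (by omega) (by omega)
      ((hval (2 * s) (by omega) (by omega) (by omega)).trans
       (hval (2 * s + 1) (by omega) (by omega) (by omega)).symm)
  · exact hpair i s (by omega) (by omega)
      ((hval (2 * s) (by omega) (by omega) (by omega)).trans
       (hval (2 * s + 1) (by omega) (by omega) (by omega)).symm)
end

section
/- Suppose d = 2 courses with grade distribution (ℓ_{11}, ℓ_{12}) = (rn, (1−r)n) and (ℓ_{21}, ℓ_{22}) = ((1−r)n, rn) for some r ∈ (0,1), biases in group 1 i.i.d. Uniform[−1, 0] and in group 2 i.i.d. Uniform[0, 1], no noise, and true quality x* = 0. Then the reweighted-mean estimator x̂_rw, defined by first setting [x̂_rw]_i = (1/2)(mean of course-i group-1 observations + mean of course-i group-2 observations) and then recentering so that Σ_i [x̂_rw]_i = (1/n)Σ_{i,j} y_{ij}, has squared risk (1/2)E‖x̂_rw‖₂² = 1/(24n) + 1/(96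 r (1−r) n), which is at least 1/(12n). -/
open MeasureTheory ProbabilityTheory

section Helpers
open Finset
variable {Ω : Type*} [MeasureSpace Ω] [IsProbabilityMeasure (ℙ : Measure Ω)]



lemma unif_props {X : Ω → ℝ} (hX : Measurable X) {a b : ℝ} (hab : a ≤ b)
    (hlaw : Measure.map X ℙ = volume.restrict (Set.Icc a b)) :
    MemLp X 2 ℙ ∧ (∫ ω, X ω ∂ℙ) = (b ^ 2 - a ^ 2) / 2 ∧
      (∫ ω, (X ω) ^ 2 ∂ℙ) = (b ^ 3 - a ^ 3) / 3 := by
  have hae : ∀ᵐ ω ∂(ℙ : Measure Ω), X ω ∈ Set.Icc a b := by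
    rw [ae_iff]
    have : {ω | ¬ X ω ∈ Set.Icc a b} = X ⁻¹' (Set.Icc a b)ᶜ := rfl
    rw [this, ← Measure.map_apply hX measurableSet_Icc.compl, hlaw,
      Measure.restrict_apply measurableSet_Icc.compl]
    simp
  have hmem : MemLp X 2 ℙ := by
    refine MemLp.of_bound hX.aestronglyMeasurable (max |a| |b|) ?_
    filter_upwards [hae] with ω hω
    exact abs_le_max_abs_abs hω.1 hω.2
  refine ⟨hmem, ?_, ?_⟩
  · rw [show (∫ ω, X ω ∂ℙ) = ∫ x, x ∂(Measure.map X ℙ) from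
      (integral_map hX.aemeasurable aestronglyMeasurable_id).symm, hlaw,
      integral_Icc_eq_integral_Ioc, ← intervalIntegral.integral_of_le hab,
      integral_id]
  · rw [show (∫ ω, (X ω) ^ 2 ∂ℙ) = ∫ x, x ^ 2 ∂(Measure.map X ℙ) from
      (integral_map hX.aemeasurable (measurable_id.pow_const 2).aestronglyMeasurable).symm,
      hlaw, integral_Icc_eq_integral_Ioc, ← intervalIntegral.integral_of_le hab,
      integral_pow]
    norm_num


/-- second moment of a linear combination of independent L² variables -/
lemma second_moment_lin {ι : Type*} [Fintype ι]
    (X : ι → Ω → ℝ) (c : ι → ℝ)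
    (hindep : iIndepFun X ℙ)
    (hL2 : ∀ i, MemLp (X i) 2 ℙ) :
    ∫ ω, (∑ i, c i * X i ω) ^ 2 ∂ℙ
      = (∑ i, c i * ∫ ω, X i ω ∂ℙ) ^ 2 + ∑ i, (c i) ^ 2 * variance (X i) ℙ := by
  classical
  set Y : ι → Ω → ℝ := fun i ω => c i * X i ω with hY
  have hYindep : iIndepFun Y ℙ :=
    hindep.comp (fun i x => c i * x) (fun i => measurable_const_mul _)
  have hYL2 : ∀ i, MemLp (Y i) 2 ℙ := fun i => (hL2 i).const_mul _
  have hS : (fun ω => ∑ i, c i * X i ω) = ∑ i, Y i := by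
    funext ω; simp [hY, Finset.sum_apply]
  have hSL2 : MemLp (∑ i, Y i) 2 ℙ := memLp_finset_sum' _ (fun i _ => hYL2 i)
  have hvar : variance (∑ i, Y i) ℙ = ∑ i, variance (Y i) ℙ :=
    IndepFun.variance_sum (fun i _ => hYL2 i)
      (fun i _ j _ hij => hYindep.indepFun hij)
  have hdef := variance_eq_sub hSL2
  have hint : ∫ ω, (∑ i, Y i) ω ∂ℙ = ∑ i, c i * ∫ ω, X i ω ∂ℙ := by
    simp only [Finset.sum_apply]
    rw [integral_finset_sum]
    · refine Finset.sum_congr rfl fun i _ => ?_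
      simp [hY, integral_const_mul]
    · exact fun i _ => ((hL2 i).integrable one_le_two).const_mul _
  have hvar' : ∀ i, variance (Y i) ℙ = (c i) ^ 2 * variance (X i) ℙ :=
    fun i => variance_const_mul (c i) (X i) ℙ
  simp only [Pi.pow_apply] at hdef
  have key : ∫ ω, (∑ i, Y i) ω ^ 2 ∂ℙ
      = variance (∑ i, Y i) ℙ + (∫ ω, (∑ i, Y i) ω ∂ℙ) ^ 2 := by linarith
  calc ∫ ω, (∑ i, c i * X i ω) ^ 2 ∂ℙ = ∫ ω, (∑ i, Y i) ω ^ 2 ∂ℙ := by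
        congr 1; funext ω; simp [hY, Finset.sum_apply]
    _ = variance (∑ i, Y i) ℙ + (∫ ω, (∑ i, Y i) ω ∂ℙ) ^ 2 := key
    _ = _ := by rw [hvar, hint, Finset.sum_congr rfl fun i _ => hvar' i]; ring



end Helpers

set_option maxHeartbeats 1000000 in
/-- Two courses, binary grade distribution `(rn, (1−r)n)` and
`((1−r)n, rn)` with `r = m/n`, group-1 biases i.i.d. `Uniform[−1,0]`, group-2 biases
i.i.d. `Uniform[0,1]`, no noise, true quality `x* = 0`.  The reweighted-mean estimator
(average of the two within-group means per course, then recentered so that the sum of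
the two estimates equals `(1/n)·(sum of all observations)`) has squared risk
`(1/2)E‖x̂_rw‖₂² = 1/(24n) + 1/(96 r(1−r) n) ≥ 1/(12n)`.
The four independent blocks of observations are indexed by a sum type:
`inl (inl j)` = course 1 group 1 (`m` variables, `Uniform[−1,0]`),
`inl (inr j)` = course 1 group 2 (`n−m` variables, `Uniform[0,1]`),
`inr (inl j)` = course 2 group 1 (`n−m` variables, `Uniform[−1,0]`),
`inr (inr j)` = course 2 group 2 (`m` variables, `Uniform[0,1]`). -/
theorem reweighted_mean_uniform_risk
    (n m : ℕ) (hm : 0 < m) (hmn : m < n)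
    {Ω : Type*} [MeasureSpace Ω] [IsProbabilityMeasure (ℙ : Measure Ω)]
    (X : ((Fin m ⊕ Fin (n - m)) ⊕ (Fin (n - m) ⊕ Fin m)) → Ω → ℝ)
    (hmeas : ∀ i, Measurable (X i))
    (hindep : iIndepFun X ℙ)
    (hlaw1 : ∀ j : Fin m,
      Measure.map (X (Sum.inl (Sum.inl j))) ℙ = volume.restrict (Set.Icc (-1 : ℝ) 0))
    (hlaw2 : ∀ j : Fin (n - m),
      Measure.map (X (Sum.inl (Sum.inr j))) ℙ = volume.restrict (Set.Icc (0 : ℝ) 1))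
    (hlaw3 : ∀ j : Fin (n - m),
      Measure.map (X (Sum.inr (Sum.inl j))) ℙ = volume.restrict (Set.Icc (-1 : ℝ) 0))
    (hlaw4 : ∀ j : Fin m,
      Measure.map (X (Sum.inr (Sum.inr j))) ℙ = volume.restrict (Set.Icc (0 : ℝ) 1)) :
    let Ubar : Ω → ℝ := fun ω => (∑ j : Fin m, X (Sum.inl (Sum.inl j)) ω) / m
    let Vbar : Ω → ℝ := fun ω => (∑ j : Fin (n - m), X (Sum.inl (Sum.inr j)) ω) / ((n : ℝ) - m)
    let Upbar : Ω → ℝ := fun ω => (∑ j : Fin (n - m), X (Sum.inr (Sum.inl j)) ω) / ((n : ℝ) - m)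
    let Vpbar : Ω → ℝ := fun ω => (∑ j : Fin m, X (Sum.inr (Sum.inr j)) ω) / m
    let x1 : Ω → ℝ := fun ω => (Ubar ω + Vbar ω) / 2
    let x2 : Ω → ℝ := fun ω => (Upbar ω + Vpbar ω) / 2
    let total : Ω → ℝ := fun ω => ∑ i, X i ω
    let recenter : Ω → ℝ := fun ω => -(x1 ω + x2 ω) / 2 + total ω / (2 * n)
    let r : ℝ := (m : ℝ) / n
    ((1 : ℝ) / 2) * ∫ ω, ((x1 ω + recenter ω) ^ 2 + (x2 ω + recenter ω) ^ 2) ∂ℙ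
        = 1 / (24 * n) + 1 / (96 * r * (1 - r) * n)
      ∧ (1 : ℝ) / (12 * n) ≤ 1 / (24 * n) + 1 / (96 * r * (1 - r) * n) := by
  intro Ubar Vbar Upbar Vpbar x1 x2 total recenter r
  have hm0 : (0 : ℝ) < m := by exact_mod_cast hm
  have hn0 : (0 : ℝ) < n := by exact_mod_cast hm.trans hmn
  have hmn' : (m : ℝ) < n := by exact_mod_cast hmn
  have hnm0 : (0 : ℝ) < (n : ℝ) - m := by linarith
  have hcast : ((n - m : ℕ) : ℝ) = (n : ℝ) - m := by
    push_cast [Nat.cast_sub hmn.le]; ring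
  -- per-variable moments
  set μv : ((Fin m ⊕ Fin (n - m)) ⊕ (Fin (n - m) ⊕ Fin m)) → ℝ :=
    Sum.elim (Sum.elim (fun _ => -(1/2)) (fun _ => 1/2))
      (Sum.elim (fun _ => -(1/2)) (fun _ => 1/2)) with hμv
  have hprops : ∀ i, MemLp (X i) 2 ℙ ∧ (∫ ω, X i ω ∂ℙ) = μv i ∧
      variance (X i) ℙ = 1/12 := by
    intro i
    have key : ∀ (Y : Ω → ℝ), Measurable Y → ∀ a b : ℝ, a ≤ b →
        Measure.map Y ℙ = volume.restrict (Set.Icc a b) →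
        MemLp Y 2 ℙ ∧ (∫ ω, Y ω ∂ℙ) = (b^2 - a^2)/2 ∧
          variance Y ℙ = (b^3-a^3)/3 - ((b^2-a^2)/2)^2 := by
      intro Y hY a b hab hl
      obtain ⟨h1, h2, h3⟩ := unif_props hY hab hl
      refine ⟨h1, h2, ?_⟩
      have := variance_eq_sub (μ := ℙ) h1
      simp only [Pi.pow_apply] at this
      rw [this, h2, h3]
    rcases i with (j | j) | (j | j)
    · obtain ⟨h1, h2, h3⟩ := key _ (hmeas _) (-1) 0 (by norm_num) (hlaw1 j)
      exact ⟨h1, by rw [h2]; norm_num [hμv], by rw [h3]; norm_num⟩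
    · obtain ⟨h1, h2, h3⟩ := key _ (hmeas _) 0 1 (by norm_num) (hlaw2 j)
      exact ⟨h1, by rw [h2]; norm_num [hμv], by rw [h3]; norm_num⟩
    · obtain ⟨h1, h2, h3⟩ := key _ (hmeas _) (-1) 0 (by norm_num) (hlaw3 j)
      exact ⟨h1, by rw [h2]; norm_num [hμv], by rw [h3]; norm_num⟩
    · obtain ⟨h1, h2, h3⟩ := key _ (hmeas _) 0 1 (by norm_num) (hlaw4 j)
      exact ⟨h1, by rw [h2]; norm_num [hμv], by rw [h3]; norm_num⟩
  have hL2 : ∀ i, MemLp (X i) 2 ℙ := fun i => (hprops i).1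
  -- coefficient functions
  set ca : ((Fin m ⊕ Fin (n - m)) ⊕ (Fin (n - m) ⊕ Fin m)) → ℝ :=
    Sum.elim (Sum.elim (fun _ => 1/(4*(m:ℝ))) (fun _ => 1/(4*((n:ℝ)-m))))
      (Sum.elim (fun _ => -(1/(4*((n:ℝ)-m)))) (fun _ => -(1/(4*(m:ℝ))))) with hca
  set cb : ((Fin m ⊕ Fin (n - m)) ⊕ (Fin (n - m) ⊕ Fin m)) → ℝ :=
    fun _ => 1/(2*(n:ℝ)) with hcb
  have keyA := second_moment_lin X ca hindep hL2
  have keyB := second_moment_lin X cb hindep hL2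
  have hμsumA : (∑ i, ca i * ∫ ω, X i ω ∂ℙ) = 0 := by
    rw [Finset.sum_congr rfl (fun i _ => by rw [(hprops i).2.1])]
    simp only [hca, hμv, Fintype.sum_sum_type, Sum.elim_inl, Sum.elim_inr,
      Finset.sum_const, Finset.card_univ, Fintype.card_fin, nsmul_eq_mul, hcast]
    push_cast [hcast]
    field_simp
    try push_cast [hcast]
    try ring
  have hμsumB : (∑ i, cb i * ∫ ω, X i ω ∂ℙ) = 0 := by
    rw [Finset.sum_congr rfl (fun i _ => by rw [(hprops i).2.1])]
    simp only [hcb, hμv, Fintype.sum_sum_type, Sum.elim_inl, Sum.elim_inr,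
      Finset.sum_const, Finset.card_univ, Fintype.card_fin, nsmul_eq_mul, hcast]
    push_cast [hcast]
    field_simp
    try push_cast [hcast]
    try ring
  have hvsumA : (∑ i, (ca i)^2 * variance (X i) ℙ) = (n:ℝ)/(96*m*((n:ℝ)-m)) := by
    rw [Finset.sum_congr rfl (fun i _ => by rw [(hprops i).2.2])]
    simp only [hca, Fintype.sum_sum_type, Sum.elim_inl, Sum.elim_inr,
      Finset.sum_const, Finset.card_univ, Fintype.card_fin, nsmul_eq_mul, hcast]
    push_cast [hcast]
    field_simp
    try push_cast [hcast]
    try ring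
  have hvsumB : (∑ i, (cb i)^2 * variance (X i) ℙ) = 1/(24*(n:ℝ)) := by
    rw [Finset.sum_congr rfl (fun i _ => by rw [(hprops i).2.2])]
    simp only [hcb, Fintype.sum_sum_type, Sum.elim_inl, Sum.elim_inr,
      Finset.sum_const, Finset.card_univ, Fintype.card_fin, nsmul_eq_mul, hcast,
      Fintype.card_sum]
    push_cast [hcast]
    field_simp
    try push_cast [hcast]
    try ring
  rw [hμsumA, hvsumA] at keyA
  rw [hμsumB, hvsumB] at keyB
  -- pointwise rewriting of the integrand
  have hpt : ∀ ω, (x1 ω + recenter ω) ^ 2 + (x2 ω + recenter ω) ^ 2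
      = 2 * (∑ i, ca i * X i ω) ^ 2 + 2 * (∑ i, cb i * X i ω) ^ 2 := by
    intro ω
    simp only [x1, x2, recenter, total, Ubar, Vbar, Upbar, Vpbar, hca, hcb,
      Fintype.sum_sum_type, Sum.elim_inl, Sum.elim_inr]
    rw [← Finset.mul_sum, ← Finset.mul_sum, ← Finset.mul_sum, ← Finset.mul_sum,
      ← Finset.mul_sum, ← Finset.mul_sum, ← Finset.mul_sum, ← Finset.mul_sum]
    generalize (∑ j : Fin m, X (Sum.inl (Sum.inl j)) ω) = A
    generalize (∑ j : Fin (n - m), X (Sum.inl (Sum.inr j)) ω) = B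
    generalize (∑ j : Fin (n - m), X (Sum.inr (Sum.inl j)) ω) = C
    generalize (∑ j : Fin m, X (Sum.inr (Sum.inr j)) ω) = D
    field_simp
    ring
  -- integrability
  have hML2 : ∀ (c : ((Fin m ⊕ Fin (n - m)) ⊕ (Fin (n - m) ⊕ Fin m)) → ℝ),
      MemLp (fun ω => ∑ i, c i * X i ω) 2 ℙ := by
    intro c
    have : (fun ω => ∑ i, c i * X i ω) = ∑ i, (fun ω => c i * X i ω) := by
      funext ω; simp [Finset.sum_apply]
    rw [this]
    exact memLp_finset_sum' _ (fun i _ => (hL2 i).const_mul _)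
  have hIa : Integrable (fun ω => (∑ i, ca i * X i ω) ^ 2) ℙ := (hML2 ca).integrable_sq
  have hIb : Integrable (fun ω => (∑ i, cb i * X i ω) ^ 2) ℙ := (hML2 cb).integrable_sq
  have hint : ∫ ω, ((x1 ω + recenter ω) ^ 2 + (x2 ω + recenter ω) ^ 2) ∂ℙ
      = 2 * ((n:ℝ)/(96*m*((n:ℝ)-m))) + 2 * (1/(24*(n:ℝ))) := by
    rw [show (∫ ω, ((x1 ω + recenter ω) ^ 2 + (x2 ω + recenter ω) ^ 2) ∂ℙ)
        = ∫ ω, (2 * (∑ i, ca i * X i ω) ^ 2 + 2 * (∑ i, cb i * X i ω) ^ 2) ∂ℙ from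
      integral_congr_ae (Filter.Eventually.of_forall fun ω => hpt ω)]
    rw [integral_add (hIa.const_mul 2) (hIb.const_mul 2), integral_const_mul,
      integral_const_mul, keyA, keyB]
    ring
  constructor
  · rw [hint]
    simp only [r]
    field_simp
    ring
  · have hr0 : 0 < r := div_pos hm0 hn0
    have hr1 : r < 1 := (div_lt_one hn0).2 hmn'
    have h4 : r * (1 - r) ≤ 1/4 := by nlinarith [sq_nonneg (r - 1/2)]
    have h1r : (0:ℝ) < 1 - r := by linarith
    have hpos : 0 < 96 * r * (1 - r) * n :=
      mul_pos (mul_pos (mul_pos (by norm_num) hr0) h1r) hn0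
    have : 96 * r * (1 - r) * n ≤ 24 * n := by nlinarith
    have := one_div_le_one_div_of_le hpos this
    have h24 : (0:ℝ) < 24 * n := by positivity
    calc (1:ℝ)/(12*n) = 1/(24*n) + 1/(24*n) := by field_simp; ring
      _ ≤ 1/(24*n) + 1/(96*r*(1-r)*n) := by linarith
end
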